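/- arXiv:1302.0935 — 5 statements merged into one kernel-verified Lean document; each statement's English description precedes it below -/
import Mathlib

section
/- Let d ≥ 1, let β₂ ≥ 0 and K ≥ 0, and let σ₁ : ℝ^d → ℝ^d be K-Lipschitz and β₂-dissipative. Let b ≥ 0 and c ≥ 0 with c·K < 1. If for every ζ ∈ ℝ^d the equation z = ζ + b·σ₁(z) has a unique solution z ∈ ℝ^d, then for every ζ ∈ ℝ^d the equation z = ζ + (b + c)·σ₁(z) also has a unique solution z ∈ ℝ^d. -/
/-!
Dissipativity makes `σ₁` monotone decreasing, so for `a ≥ 0` the solution of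
`z = η + a • σ₁ z` depends 1-Lipschitz on `η`; in particular it is unique. Writing `S` for the
solution map at `b`, a solution at `b + c` is a fixed point of `z ↦ S (ζ + c • σ₁ z)`, which is
a contraction with constant `c * K < 1`.
-/

open RealInnerProductSpace NNReal

section

variable {E : Type*} [NormedAddCommGroup E] [InnerProductSpace ℝ E] {σ : E → E}

theorem inner_sub_nonpos_of_dissipative {β : ℝ} (hβ : 0 ≤ β)
    (hσ : ∀ z z', ⟪σ z - σ z', z - z'⟫ ≤ -β * ‖z - z'‖ ^ 2) (z z' : E) :
    ⟪σ z - σ z', z - z'⟫ ≤ 0 :=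
  (hσ z z').trans (mul_nonpos_of_nonpos_of_nonneg (neg_nonpos.2 hβ) (sq_nonneg _))

theorem norm_sub_le_of_eq_add_smul (hσ : ∀ z z', ⟪σ z - σ z', z - z'⟫ ≤ 0) {a : ℝ}
    (ha : 0 ≤ a) {η η' z z' : E} (hz : z = η + a • σ z) (hz' : z' = η' + a • σ z') :
    ‖z - z'‖ ≤ ‖η - η'‖ := by
  have hdiff : z - z' = (η - η') + a • (σ z - σ z') := by
    nth_rewrite 1 [hz, hz']
    module
  have hsq : ‖z - z'‖ ^ 2 ≤ ‖η - η'‖ * ‖z - z'‖ :=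
    calc ‖z - z'‖ ^ 2 = ⟪η - η', z - z'⟫ + a * ⟪σ z - σ z', z - z'⟫ := by
          rw [← real_inner_self_eq_norm_sq]
          nth_rewrite 1 [hdiff]
          rw [inner_add_left, real_inner_smul_left]
      _ ≤ ⟪η - η', z - z'⟫ := by nlinarith [hσ z z']
      _ ≤ ‖η - η'‖ * ‖z - z'‖ := real_inner_le_norm _ _
  nlinarith [norm_nonneg (z - z'), norm_nonneg (η - η')]

theorem eq_of_eq_add_smul (hσ : ∀ z z', ⟪σ z - σ z', z - z'⟫ ≤ 0) {a : ℝ} (ha : 0 ≤ a)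
    {ζ z z' : E} (hz : z = ζ + a • σ z) (hz' : z' = ζ + a • σ z') : z = z' := by
  simpa [sub_eq_zero] using norm_sub_le_of_eq_add_smul hσ ha hz hz'

theorem exists_eq_add_add_smul [CompleteSpace E] {S : E → E} {b c : ℝ} {K : ℝ≥0}
    (hS : ∀ η, S η = η + b • σ (S η)) (hSlip : LipschitzWith 1 S) (hσ : LipschitzWith K σ)
    (hc : 0 ≤ c) (hcK : c * K < 1) (ζ : E) : ∃ z, z = ζ + (b + c) • σ z := by
  set T : E → E := fun z => S (ζ + c • σ z)
  have hT : ContractingWith (‖c‖₊ * K) T := by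
    refine ⟨by simpa [← NNReal.coe_lt_coe, abs_of_nonneg hc] using hcK,
      LipschitzWith.of_dist_le_mul fun z z' => ?_⟩
    calc dist (T z) (T z') ≤ dist (ζ + c • σ z) (ζ + c • σ z') := by
          simpa using hSlip.dist_le_mul (ζ + c • σ z) (ζ + c • σ z')
      _ = ‖c‖ * dist (σ z) (σ z') := by rw [dist_add_left, dist_smul₀]
      _ ≤ ‖c‖ * (K * dist z z') := by gcongr; exact hσ.dist_le_mul z z'
      _ = ↑(‖c‖₊ * K) * dist z z' := by push_cast; ring
  obtain ⟨z, hz, -⟩ := hT.exists_fixedPoint 0 (edist_ne_top _ _)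
  refine ⟨z, ?_⟩
  calc z = T z := hz.symm
    _ = ζ + c • σ z + b • σ (T z) := hS _
    _ = ζ + (b + c) • σ z := by rw [hz]; module

end

theorem algebraic_equation_continuation_step_general
    (d : ℕ) (β₂ K : ℝ) (hβ₂ : 0 ≤ β₂) (hK : 0 ≤ K)
    (σ₁ : EuclideanSpace ℝ (Fin d) → EuclideanSpace ℝ (Fin d))
    (hLip : ∀ z z' : EuclideanSpace ℝ (Fin d), ‖σ₁ z - σ₁ z'‖ ≤ K * ‖z - z'‖)
    (hDiss : ∀ z z' : EuclideanSpace ℝ (Fin d),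
      ⟪σ₁ z - σ₁ z', z - z'⟫ ≤ -β₂ * ‖z - z'‖ ^ 2)
    (b c : ℝ) (hb : 0 ≤ b) (hc : 0 ≤ c) (hcK : c * K < 1)
    (hsol : ∀ ζ : EuclideanSpace ℝ (Fin d),
      ∃! z : EuclideanSpace ℝ (Fin d), z = ζ + b • σ₁ z) :
    ∀ ζ : EuclideanSpace ℝ (Fin d),
      ∃! z : EuclideanSpace ℝ (Fin d), z = ζ + (b + c) • σ₁ z := by
  have hmono := inner_sub_nonpos_of_dissipative hβ₂ hDiss
  choose S hS using fun η => (hsol η).exists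
  have hSlip : LipschitzWith 1 S := LipschitzWith.of_dist_le_mul fun η η' => by
    simpa [dist_eq_norm] using norm_sub_le_of_eq_add_smul hmono hb (hS η) (hS η')
  have hσ : LipschitzWith ⟨K, hK⟩ σ₁ := LipschitzWith.of_dist_le_mul fun z z' => by
    rw [dist_eq_norm, dist_eq_norm]
    exact hLip z z'
  intro ζ
  obtain ⟨z, hz⟩ := exists_eq_add_add_smul hS hSlip hσ hc hcK ζ
  exact ⟨z, hz, fun y hy => eq_of_eq_add_smul hmono (add_nonneg hb hc) hy hz⟩

/-- **Continuation step in the proof of Proposition 4.1.** Let `d ≥ 1`, `β₂ ≥ 0`, `K ≥ 0` and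
let `σ₁ : ℝ^d → ℝ^d` be `K`-Lipschitz and `β₂`-dissipative.  Let `b, c ≥ 0` with `c * K < 1`.
If for every `ζ` the equation `z = ζ + b • σ₁ z` has a unique solution, then for every `ζ`
the equation `z = ζ + (b + c) • σ₁ z` also has a unique solution. -/
theorem algebraic_equation_continuation_step
    (d : ℕ) (hd : 1 ≤ d) (β₂ K : ℝ) (hβ₂ : 0 ≤ β₂) (hK : 0 ≤ K)
    (σ₁ : EuclideanSpace ℝ (Fin d) → EuclideanSpace ℝ (Fin d))
    (hLip : ∀ z z' : EuclideanSpace ℝ (Fin d), ‖σ₁ z - σ₁ z'‖ ≤ K * ‖z - z'‖)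
    (hDiss : ∀ z z' : EuclideanSpace ℝ (Fin d),
      ⟪σ₁ z - σ₁ z', z - z'⟫ ≤ -β₂ * ‖z - z'‖ ^ 2)
    (b c : ℝ) (hb : 0 ≤ b) (hc : 0 ≤ c) (hcK : c * K < 1)
    (hsol : ∀ ζ : EuclideanSpace ℝ (Fin d),
      ∃! z : EuclideanSpace ℝ (Fin d), z = ζ + b • σ₁ z) :
    ∀ ζ : EuclideanSpace ℝ (Fin d),
      ∃! z : EuclideanSpace ℝ (Fin d), z = ζ + (b + c) • σ₁ z :=
  algebraic_equation_continuation_step_general d β₂ K hβ₂ hK σ₁ hLip hDiss b c hb hc hcK hsol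
end

section
/- In the algebraic-equation setting, for every (s, x̄, y, ζ) ∈ [0,T]×ℝⁿ×ℝ×ℝ^d there exists a unique z ∈ ℝ^d satisfying z = ζ + D_xφ(s,x̄)·σ(s, x̄, y + φ(s,x̄), z); denote this unique solution by h(s,x̄,y,ζ). Moreover there exists a constant C, depending only on K, L, M, β₂, T and sup_{s∈[0,T]}|φ(s,0)|, such that for all s ∈ [0,T], x̄ ∈ ℝⁿ, y, y' ∈ ℝ and ζ, ζ' ∈ ℝ^d: |h(s,x̄,y,ζ) − h(s,x̄,y',ζ')| ≤ C(|y − y'| + |ζ − ζ'|) and |h(s,x̄,y,ζ)| ≤ C(1 + |x̄| + |y| + |ζ|). -/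
open RealInnerProductSpace NNReal

/-!
For fixed `(s, x̄)` only the first row `g(Y, z) = σ₁(s, x̄, Y, z)` of `σ` enters, with the
coefficient `a = ∂φ/∂x₁(s, x̄) ≥ 0`, so the equation reads `z = ζ + a g(Y, z)` with `g(Y, ·)`
strongly dissipative. A solution exists because the relaxed map `z ↦ (1 - θ) z + θ (ζ + a g(Y, z))`
is a contraction for small `θ > 0`: dissipativity kills the cross term. Testing the difference of
two solutions against itself gives `(1 + aβ₂) |z - z'|² ≤ (|ζ - ζ'| + a c) |z - z'|`, where `c`
bounds the change of `g` in `Y`, hence `|z - z'| ≤ |ζ - ζ'| + c / β₂` uniformly in `a`; the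
growth bound is the comparison with the solution `0` of `0 = 0 + a · 0`, together with the linear
growth of `φ` given by the mean value theorem.
-/

section InnerProductSpace

variable {E : Type*} [NormedAddCommGroup E] [InnerProductSpace ℝ E]

theorem norm_add_smul_sq_le_of_inner_nonpos {u v : E} {θ K : ℝ} (hθ₀ : 0 ≤ θ) (hθ₁ : θ ≤ 1)
    (hvu : ⟪v, u⟫ ≤ 0) (hv : ‖v‖ ≤ K * ‖u‖) :
    ‖(1 - θ) • u + θ • v‖ ^ 2 ≤ ((1 - θ) ^ 2 + θ ^ 2 * K ^ 2) * ‖u‖ ^ 2 := by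
  have hv2 : ‖v‖ ^ 2 ≤ K ^ 2 * ‖u‖ ^ 2 := by
    rw [← mul_pow]; exact pow_le_pow_left₀ (norm_nonneg v) hv 2
  rw [norm_add_sq_real, norm_smul, norm_smul, real_inner_smul_left, real_inner_smul_right,
    real_inner_comm, Real.norm_of_nonneg (sub_nonneg.2 hθ₁), Real.norm_of_nonneg hθ₀]
  nlinarith [mul_nonneg (sub_nonneg.2 hθ₁) hθ₀, mul_le_mul_of_nonneg_left hv2 (sq_nonneg θ)]

theorem contractingWith_relaxation {g : E → E} {K : ℝ≥0} (hg : LipschitzWith K g)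
    (hdiss : ∀ z z', ⟪g z - g z', z - z'⟫ ≤ 0) :
    ContractingWith (Real.toNNReal (Real.sqrt (1 - (1 + (K : ℝ) ^ 2)⁻¹)))
      (fun z => (1 - (1 + (K : ℝ) ^ 2)⁻¹) • z + (1 + (K : ℝ) ^ 2)⁻¹ • g z) := by
  set θ : ℝ := (1 + (K : ℝ) ^ 2)⁻¹ with hθ
  have hθ₀ : 0 < θ := by positivity
  have hθ₁ : θ ≤ 1 := inv_le_one_of_one_le₀ (by nlinarith [sq_nonneg (K : ℝ)])
  have hθK : θ ^ 2 * K ^ 2 = θ - θ ^ 2 := by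
    rw [hθ]; field_simp; ring
  refine ⟨?_, LipschitzWith.of_dist_le' fun z z' => ?_⟩
  · rw [← NNReal.coe_lt_coe, Real.coe_toNNReal _ (Real.sqrt_nonneg _), NNReal.coe_one,
      Real.sqrt_lt' one_pos]
    linarith
  · have hsq := norm_add_smul_sq_le_of_inner_nonpos hθ₀.le hθ₁
      (hdiss z z') (by simpa only [dist_eq_norm] using hg.dist_le_mul z z')
    rw [hθK, show (1 - θ) ^ 2 + (θ - θ ^ 2) = 1 - θ by ring] at hsq
    rw [dist_eq_norm, dist_eq_norm, ← pow_le_pow_iff_left₀ (norm_nonneg _)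
      (by positivity) two_ne_zero, mul_pow, Real.sq_sqrt (by linarith)]
    rwa [show (1 - θ) • z + θ • g z - ((1 - θ) • z' + θ • g z') =
      (1 - θ) • (z - z') + θ • (g z - g z') by module]

theorem existsUnique_eq_add_of_inner_sub_nonpos [CompleteSpace E] {f : E → E} {K : ℝ≥0}
    (hf : LipschitzWith K f) (hdiss : ∀ z z', ⟪f z - f z', z - z'⟫ ≤ 0) (ζ : E) :
    ∃! z, z = ζ + f z := by
  have hcontr := contractingWith_relaxation (g := fun z => ζ + f z)
    (LipschitzWith.of_dist_le_mul fun z z' => by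
      simpa only [dist_add_left] using hf.dist_le_mul z z')
    (by simpa only [add_sub_add_left_eq_sub] using hdiss)
  set θ : ℝ := (1 + (K : ℝ) ^ 2)⁻¹
  have hθ : θ ≠ 0 := by positivity
  have hfix : ∀ z, (1 - θ) • z + θ • (ζ + f z) = z ↔ z = ζ + f z := fun z => by
    rw [← sub_eq_zero, ← sub_eq_zero (a := z),
      show (1 - θ) • z + θ • (ζ + f z) - z = θ • -(z - (ζ + f z)) by module,
      smul_eq_zero, neg_eq_zero, or_iff_right hθ]
  exact ⟨_, (hfix _).1 hcontr.fixedPoint_isFixedPt,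
    fun z hz => hcontr.fixedPoint_unique ((hfix z).2 hz)⟩

theorem norm_sub_le_of_eq_add_smul_s3 {g g' : E → E} {z z' ζ ζ' : E} {a β c : ℝ} (ha : 0 ≤ a)
    (hβ : 0 < β) (hdiss : ⟪g z - g z', z - z'⟫ ≤ -β * ‖z - z'‖ ^ 2) (hc : ‖g z' - g' z'‖ ≤ c)
    (hz : z = ζ + a • g z) (hz' : z' = ζ' + a • g' z') :
    ‖z - z'‖ ≤ ‖ζ - ζ'‖ + c / β := by
  set w := z - z'
  have hw : ‖w‖ ^ 2 = ⟪ζ - ζ', w⟫ + a * (⟪g z - g z', w⟫ + ⟪g z' - g' z', w⟫) := by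
    rw [← real_inner_self_eq_norm_sq, ← inner_add_left, ← real_inner_smul_left, ← inner_add_left]
    congr 1
    linear_combination (norm := module) hz - hz'
  have hc₀ : 0 ≤ c := (norm_nonneg _).trans hc
  have hpert := (real_inner_le_norm (g z' - g' z') w).trans
    (mul_le_mul_of_nonneg_right hc (norm_nonneg w))
  have hsq : (1 + a * β) * ‖w‖ ^ 2 ≤ (‖ζ - ζ'‖ + a * c) * ‖w‖ := by
    nlinarith [real_inner_le_norm (ζ - ζ') w, mul_le_mul_of_nonneg_left (add_le_add hdiss hpert) ha]
  rcases (norm_nonneg w).eq_or_lt with hw₀ | hw₀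
  · rw [← hw₀]; positivity
  have hlin : (1 + a * β) * ‖w‖ ≤ ‖ζ - ζ'‖ + a * c :=
    le_of_mul_le_mul_right (by nlinarith) hw₀
  rw [← sub_le_iff_le_add', le_div_iff₀ hβ]
  nlinarith [mul_nonneg ha hβ.le, mul_nonneg (mul_nonneg ha hβ.le) (norm_nonneg (ζ - ζ'))]

theorem exists_solution_eq_add_smul [CompleteSpace E] {g : ℝ → E → E} {a β K : ℝ} (ha : 0 ≤ a)
    (hβ : 0 < β) (hLip : ∀ Y Y' z z', ‖g Y z - g Y' z'‖ ≤ K * (|Y - Y'| + ‖z - z'‖))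
    (hdiss : ∀ Y z z', ⟪g Y z - g Y z', z - z'⟫ ≤ -β * ‖z - z'‖ ^ 2) :
    ∃ h : ℝ → E → E, (∀ Y ζ, h Y ζ = ζ + a • g Y (h Y ζ)) ∧
      (∀ Y ζ z, z = ζ + a • g Y z → z = h Y ζ) ∧
      (∀ Y Y' ζ ζ', ‖h Y ζ - h Y' ζ'‖ ≤ ‖ζ - ζ'‖ + K * |Y - Y'| / β) ∧
      ∀ Y ζ, ‖h Y ζ‖ ≤ ‖ζ‖ + ‖g Y 0‖ / β := by
  have hsol : ∀ Y ζ, ∃! z, z = ζ + a • g Y z := fun Y ζ =>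
    existsUnique_eq_add_of_inner_sub_nonpos
      ((lipschitzWith_smul a).comp (LipschitzWith.of_dist_le' fun z z' => by
        simpa [dist_eq_norm] using hLip Y Y z z'))
      (fun z z' => by
        rw [← smul_sub, real_inner_smul_left]
        exact mul_nonpos_of_nonneg_of_nonpos ha ((hdiss Y z z').trans
          (mul_nonpos_of_nonpos_of_nonneg (neg_nonpos.2 hβ.le) (sq_nonneg _)))) ζ
  choose h hfix huniq using hsol
  refine ⟨h, hfix, huniq, fun Y Y' ζ ζ' => ?_, fun Y ζ => ?_⟩
  · exact norm_sub_le_of_eq_add_smul_s3 ha hβ (hdiss Y _ _)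
      (by simpa using hLip Y Y' (h Y' ζ') (h Y' ζ')) (hfix Y ζ) (hfix Y' ζ')
  · simpa using norm_sub_le_of_eq_add_smul_s3 (g' := 0) (ζ' := 0) ha hβ (hdiss Y _ 0) le_rfl
      (hfix Y ζ) (by simp)

end InnerProductSpace

theorem abs_le_abs_add_mul_norm_of_norm_fderiv_le {F : Type*} [NormedAddCommGroup F]
    [NormedSpace ℝ F] {f : F → ℝ} {M : ℝ} (hf : Differentiable ℝ f)
    (hM : ∀ p, ‖fderiv ℝ f p‖ ≤ M) (p : F) : |f p| ≤ |f 0| + M * ‖p‖ := by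
  have := convex_univ.norm_image_sub_le_of_norm_fderiv_le (fun q _ => hf q) (fun q _ => hM q)
    (Set.mem_univ 0) (Set.mem_univ p)
  rw [sub_zero, Real.norm_eq_abs] at this
  linarith [abs_sub_abs_le_abs_sub (f p) (f 0)]

theorem abs_le_abs_add_mul_of_mem_Icc {F : Type*} [NormedAddCommGroup F] [NormedSpace ℝ F]
    {f : ℝ × F → ℝ} {M T s : ℝ} (hf : Differentiable ℝ f) (hM₀ : 0 ≤ M)
    (hM : ∀ p, ‖fderiv ℝ f p‖ ≤ M) (hs : s ∈ Set.Icc 0 T) (x : F) :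
    |f (s, x)| ≤ |f 0| + M * (T + ‖x‖) := by
  have hsx : ‖(s, x)‖ ≤ T + ‖x‖ := by
    rw [Prod.norm_def, Real.norm_of_nonneg hs.1]
    exact max_le (by linarith [norm_nonneg x, hs.2]) (by linarith [hs.1, hs.2])
  exact (abs_le_abs_add_mul_norm_of_norm_fderiv_le hf hM (s, x)).trans (by gcongr)

theorem one_add_add_abs_add_le {r y v c M T : ℝ} (hr : 0 ≤ r) (hc : 0 ≤ c) (hM : 0 ≤ M)
    (hT : 0 ≤ T) (hv : |v| ≤ c + M * (T + r)) :
    1 + r + |y + v| ≤ (1 + c + M * T + M) * (1 + r + |y|) := by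
  nlinarith [abs_add_le y v, abs_nonneg y, mul_nonneg hM hr, mul_nonneg hc hr,
    mul_nonneg hc (abs_nonneg y), mul_nonneg hM (abs_nonneg y), mul_nonneg (mul_nonneg hM hT) hr,
    mul_nonneg (mul_nonneg hM hT) (abs_nonneg y)]

theorem add_mul_le_mul_add {a u c D : ℝ} (ha : 0 ≤ a) (hu : 0 ≤ u) (hD : 1 ≤ D) (hc : c ≤ D) :
    a + c * u ≤ D * (u + a) := by
  nlinarith [mul_le_mul_of_nonneg_right hc hu, mul_le_mul_of_nonneg_right hD ha]

/-- Dimensions `n ≥ 1` and `d ≥ 1` are encoded as `n + 1` and `d + 1`; the matrix `σ` is given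
by its rows `σ t x y z i ∈ ℝ^d`, the first row being `σ t x y z 0`. -/
theorem representation_theorem_algebraic_equation
    (n d : ℕ) (T K L M β₂ : ℝ)
    (hT : 0 < T) (hK : 0 ≤ K) (hL : 0 ≤ L) (hM : 0 ≤ M) (hβ₂ : 0 < β₂)
    (σ : ℝ → EuclideanSpace ℝ (Fin (n + 1)) → ℝ → EuclideanSpace ℝ (Fin (d + 1)) →
      Fin (n + 1) → EuclideanSpace ℝ (Fin (d + 1)))
    (φ : ℝ → EuclideanSpace ℝ (Fin (n + 1)) → ℝ)
    (hσLip : ∀ t ∈ Set.Icc (0 : ℝ) T, ∀ x x' y y' z z',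
      ‖σ t x y z - σ t x' y' z'‖ ≤ K * (‖x - x'‖ + |y - y'| + ‖z - z'‖))
    (hσGrowth : ∀ t ∈ Set.Icc (0 : ℝ) T, ∀ x y z,
      ‖σ t x y z‖ ≤ L * (1 + ‖x‖ + |y| + ‖z‖))
    (hσ₁Diss : ∀ t ∈ Set.Icc (0 : ℝ) T, ∀ x y z z',
      ⟪σ t x y z 0 - σ t x y z' 0, z - z'⟫ ≤ -β₂ * ‖z - z'‖ ^ 2)
    (hφ : ContDiff ℝ 3 (fun p : ℝ × EuclideanSpace ℝ (Fin (n + 1)) => φ p.1 p.2))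
    (hφBound : ∀ i : ℕ, 1 ≤ i → i ≤ 3 →
      ∀ p : ℝ × EuclideanSpace ℝ (Fin (n + 1)),
        ‖iteratedFDeriv ℝ i (fun q : ℝ × EuclideanSpace ℝ (Fin (n + 1)) => φ q.1 q.2) p‖ ≤ M)
    (hφMono : ∀ s ∈ Set.Icc (0 : ℝ) T, ∀ x : EuclideanSpace ℝ (Fin (n + 1)),
      0 ≤ fderiv ℝ (φ s) x (EuclideanSpace.single 0 1) ∧
      ∀ i : Fin (n + 1), i ≠ 0 → fderiv ℝ (φ s) x (EuclideanSpace.single i 1) = 0) :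
    ∃ h : ℝ → EuclideanSpace ℝ (Fin (n + 1)) → ℝ → EuclideanSpace ℝ (Fin (d + 1)) →
        EuclideanSpace ℝ (Fin (d + 1)),
      (∀ s ∈ Set.Icc (0 : ℝ) T, ∀ x y ζ,
        (h s x y ζ = ζ + ∑ i : Fin (n + 1),
          fderiv ℝ (φ s) x (EuclideanSpace.single i 1) •
            σ s x (y + φ s x) (h s x y ζ) i) ∧
        (∀ z, z = ζ + ∑ i : Fin (n + 1),
          fderiv ℝ (φ s) x (EuclideanSpace.single i 1) • σ s x (y + φ s x) z i →
            z = h s x y ζ)) ∧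
      ∃ C : ℝ, 0 < C ∧ ∀ s ∈ Set.Icc (0 : ℝ) T, ∀ x y y' ζ ζ',
        ‖h s x y ζ - h s x y' ζ'‖ ≤ C * (|y - y'| + ‖ζ - ζ'‖) ∧
        ‖h s x y ζ‖ ≤ C * (1 + ‖x‖ + |y| + ‖ζ‖) := by
  have hrow : ∀ s ∈ Set.Icc (0 : ℝ) T, ∀ x Y Y' z z',
      ‖σ s x Y z 0 - σ s x Y' z' 0‖ ≤ K * (|Y - Y'| + ‖z - z'‖) := fun s hs x Y Y' z z' => by
    simpa using (norm_le_pi_norm (σ s x Y z - σ s x Y' z') 0).trans (hσLip s hs x x Y Y' z z')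
  have hsum : ∀ s ∈ Set.Icc (0 : ℝ) T, ∀ x Y z, ∑ i : Fin (n + 1),
      fderiv ℝ (φ s) x (EuclideanSpace.single i 1) • σ s x Y z i =
        fderiv ℝ (φ s) x (EuclideanSpace.single 0 1) • σ s x Y z 0 := fun s hs x Y z =>
    Fintype.sum_eq_single 0 fun i hi => by rw [(hφMono s hs x).2 i hi, zero_smul]
  choose! H hfix huniq hlip hgrowth using fun s (hs : s ∈ Set.Icc (0 : ℝ) T) x =>
    exists_solution_eq_add_smul (hφMono s hs x).1 hβ₂ (hrow s hs x) (hσ₁Diss s hs x)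
  have hφgrowth : ∀ s ∈ Set.Icc (0 : ℝ) T, ∀ x, |φ s x| ≤ |φ 0 0| + M * (T + ‖x‖) :=
    fun s hs x => abs_le_abs_add_mul_of_mem_Icc (hφ.differentiable (by norm_num)) hM
      (fun p => by simpa using hφBound 1 le_rfl (by norm_num) p) hs x
  set B := 1 + |φ 0 0| + M * T + M
  set C := 1 + K / β₂ + L / β₂ * B with hC
  have hk : 0 ≤ K / β₂ := by positivity
  have hl : 0 ≤ L / β₂ * B := by positivity
  have h1C : 1 ≤ C := by linarith
  have hKC : K / β₂ ≤ C := by linarith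
  have hLC : L / β₂ * B ≤ C := by linarith
  refine ⟨fun s x y => H s x (y + φ s x), fun s hs x y ζ => ?_, C, by linarith,
    fun s hs x y y' ζ ζ' => ⟨?_, ?_⟩⟩
  · simp only [hsum s hs]
    exact ⟨hfix s hs x _ ζ, huniq s hs x _ ζ⟩
  · calc _ ≤ ‖ζ - ζ'‖ + K / β₂ * |y - y'| := by
          simpa [mul_div_right_comm] using hlip s hs x (y + φ s x) (y' + φ s x) ζ ζ'
      _ ≤ _ := add_mul_le_mul_add (norm_nonneg _) (abs_nonneg _) h1C hKC
  · calc _ ≤ ‖ζ‖ + ‖σ s x (y + φ s x) 0 0‖ / β₂ := hgrowth s hs x _ ζ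
      _ ≤ ‖ζ‖ + L / β₂ * B * (1 + ‖x‖ + |y|) := by
        have hσ₀ := (norm_le_pi_norm (σ s x (y + φ s x) 0) 0).trans (hσGrowth s hs x _ 0)
        rw [norm_zero, add_zero] at hσ₀
        rw [mul_assoc, div_mul_eq_mul_div]
        gcongr
        refine hσ₀.trans (mul_le_mul_of_nonneg_left ?_ hL)
        exact one_add_add_abs_add_le (norm_nonneg x) (abs_nonneg _) hM hT.le (hφgrowth s hs x)
      _ ≤ _ := add_mul_le_mul_add (norm_nonneg _) (by positivity) h1C hLC
end

section
/- In the algebraic-equation setting, suppose in addition that σ₁ is continuous in its time variable uniformly with respect to the other variables, i.e. ρ(δ) := sup{ |σ₁(s₂,x,y,z) − σ₁(s₁,x,y,z)| : s₁, s₂ ∈ [0,T], |s₁ − s₂| ≤ δ, (x,y,z) ∈ ℝⁿ×ℝ×ℝ^d } satisfies ρ(δ) → 0 as δ ↓ 0. Then there exists a constant C, depending only on K, L, M, β₂, T and sup_{s∈[0,T]}|φ(s,0)|, such that whenever z₁, z₂ ∈ ℝ^d satisfy z_i = ζ + ∂φ/∂x₁(s_i,x)·σ₁(s_i, x, y + φ(s_i,x),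 z_i) for i = 1, 2, one has |z₁ − z₂| ≤ C·|s₁ − s₂|·(1 + |x| + |y| + |ζ|) + C·ρ(|s₁ − s₂|). In particular, for each fixed (x, y, ζ), the map s ↦ h(s,x,y,ζ) assigning to s the unique solution of the algebraic equation is continuous on [0,T]. -/
/-!
Since `σ₁` is dissipative in `z` and `a = ∂φ/∂x₁ ≥ 0`, the map `z ↦ z - a • σ₁(z)` is expanding:
`‖z - z'‖ ≤ ‖(z - a • σ₁ z) - (z' - a • σ₁ z')‖`. Applied to the two solutions, which share `ζ`,
this bounds `‖z₁ - z₂‖` by the defect `‖a₁ • σ₁(s₁, ·)(z₂) - a₂ • σ₁(s₂, ·)(z₂)‖` of `z₂` in the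
equation at time `s₁`. The defect is small: `σ₁` moves by at most `ρ(|s₁ - s₂|)` in time and is
Lipschitz in `y`, while `φ` and `∂φ/∂x₁` are `M`-Lipschitz in time because the first two derivatives
of `φ` are bounded by `M`. The remaining factor `‖σ₁(z₂)‖` is controlled by linear growth together
with the a priori bound on `‖z₂‖` obtained from the same expansion property against `z' = 0`.
Continuity of `s ↦ h s` follows because the bound tends to `0` with `|s₁ - s₂|`.
-/

open RealInnerProductSpace Filter Topology Set

def Dissipative {E : Type*} [NormedAddCommGroup E] [InnerProductSpace ℝ E] (f : E → E) : Prop :=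
  ∀ z z', ⟪f z - f z', z - z'⟫ ≤ 0

namespace Dissipative

variable {E : Type*} [NormedAddCommGroup E] [InnerProductSpace ℝ E] {f g : E → E}

theorem of_inner_le_neg_mul {β : ℝ} (hβ : 0 ≤ β)
    (hf : ∀ z z', ⟪f z - f z', z - z'⟫ ≤ -β * ‖z - z'‖ ^ 2) : Dissipative f :=
  fun z z' => (hf z z').trans (by nlinarith [sq_nonneg ‖z - z'‖])

theorem norm_sub_le_norm_sub_smul_sub (hf : Dissipative f) {a : ℝ} (ha : 0 ≤ a) (z z' : E) :
    ‖z - z'‖ ≤ ‖(z - a • f z) - (z' - a • f z')‖ := by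
  set w := (z - a • f z) - (z' - a • f z')
  have hsq : ‖z - z'‖ ^ 2 ≤ ‖w‖ * ‖z - z'‖ :=
    calc ‖z - z'‖ ^ 2 = ⟪w, z - z'⟫ + a * ⟪f z - f z', z - z'⟫ := by
          rw [← real_inner_self_eq_norm_sq, ← real_inner_smul_left, ← inner_add_left]
          congr 1
          module
      _ ≤ ‖w‖ * ‖z - z'‖ + a * 0 :=
          add_le_add (real_inner_le_norm _ _) (mul_le_mul_of_nonneg_left (hf z z') ha)
      _ = ‖w‖ * ‖z - z'‖ := by ring
  nlinarith [norm_nonneg w, norm_nonneg (z - z')]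

theorem norm_le_of_eq_add_smul (hf : Dissipative f) {a : ℝ} (ha : 0 ≤ a) {ζ z : E}
    (hz : z = ζ + a • f z) : ‖z‖ ≤ ‖ζ‖ + a * ‖f 0‖ :=
  calc ‖z‖ = ‖z - 0‖ := by rw [sub_zero]
    _ ≤ ‖(z - a • f z) - (0 - a • f 0)‖ := hf.norm_sub_le_norm_sub_smul_sub ha z 0
    _ = ‖ζ + a • f 0‖ := by rw [sub_eq_iff_eq_add.2 hz, zero_sub, sub_neg_eq_add]
    _ ≤ ‖ζ‖ + a * ‖f 0‖ :=
        (norm_add_le _ _).trans_eq (by rw [norm_smul, Real.norm_of_nonneg ha])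

theorem norm_sub_le_of_eq_add_smul (hf : Dissipative f) {a b : ℝ} (ha : 0 ≤ a) {ζ z w : E}
    (hz : z = ζ + a • f z) (hw : w = ζ + b • g w) : ‖z - w‖ ≤ ‖a • f w - b • g w‖ :=
  calc ‖z - w‖ ≤ ‖(z - a • f z) - (w - a • f w)‖ := hf.norm_sub_le_norm_sub_smul_sub ha z w
    _ = ‖a • f w - b • g w‖ := by
        rw [sub_eq_iff_eq_add.2 hz, eq_sub_of_add_eq hw.symm]
        congr 1
        abel

theorem norm_sub_le_of_perturbation (hf : Dissipative f) (hg : Dissipative g)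
    {a b M L P η α : ℝ} (ha : 0 ≤ a) (haM : a ≤ M) (hb : 0 ≤ b) (hbM : b ≤ M) (hab : |a - b| ≤ α)
    (hL : 0 ≤ L) (hfg : ∀ z, ‖f z - g z‖ ≤ η) (hg_growth : ∀ z, ‖g z‖ ≤ L * (P + ‖z‖))
    {ζ z w : E} (hz : z = ζ + a • f z) (hw : w = ζ + b • g w) :
    ‖z - w‖ ≤ M * η + α * (L * ((1 + M * L) * P + ‖ζ‖)) := by
  have hη : 0 ≤ η := (norm_nonneg _).trans (hfg 0)
  have hα : 0 ≤ α := (abs_nonneg _).trans hab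
  have hw_le : ‖w‖ ≤ ‖ζ‖ + M * (L * P) :=
    (hg.norm_le_of_eq_add_smul hb hw).trans <| add_le_add_right
      (mul_le_mul hbM (by simpa using hg_growth 0) (norm_nonneg _) (hb.trans hbM)) _
  have hgw : ‖g w‖ ≤ L * ((1 + M * L) * P + ‖ζ‖) :=
    (hg_growth w).trans <| mul_le_mul_of_nonneg_left (by linarith) hL
  calc ‖z - w‖ ≤ ‖a • f w - b • g w‖ := hf.norm_sub_le_of_eq_add_smul ha hz hw
    _ = ‖a • (f w - g w) + (a - b) • g w‖ := by congr 1; module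
    _ ≤ a * ‖f w - g w‖ + |a - b| * ‖g w‖ := by
        refine (norm_add_le _ _).trans_eq ?_
        rw [norm_smul, norm_smul, Real.norm_of_nonneg ha, Real.norm_eq_abs]
    _ ≤ M * η + α * (L * ((1 + M * L) * P + ‖ζ‖)) := by
        gcongr
        · exact ha.trans haM
        · exact hfg w

end Dissipative

theorem continuousOn_of_dist_le_of_tendsto {E : Type*} [PseudoMetricSpace E] {f : ℝ → E}
    {S : Set ℝ} {ω : ℝ → ℝ} (hω : Tendsto ω (𝓝[>] 0) (𝓝 0))
    (hf : ∀ s ∈ S, ∀ t ∈ S, t ≠ s → dist (f t) (f s) ≤ ω |t - s|) : ContinuousOn f S := by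
  intro s hs
  rw [← continuousWithinAt_sdiff_self, ContinuousWithinAt, tendsto_iff_dist_tendsto_zero]
  have hdist : Tendsto (fun t => |t - s|) (𝓝[S \ {s}] s) (𝓝[>] 0) := by
    refine tendsto_nhdsWithin_iff.2 ⟨?_, ?_⟩
    · simpa using ((continuous_id.sub (continuous_const (y := s))).abs.tendsto s).mono_left
        (nhdsWithin_le_nhds (s := S \ {s}))
    · filter_upwards [self_mem_nhdsWithin] with t ht
      exact abs_pos.2 (sub_ne_zero.2 ht.2)
  refine squeeze_zero' (Eventually.of_forall fun _ => dist_nonneg) ?_ (hω.comp hdist)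
  filter_upwards [self_mem_nhdsWithin] with t ht
  exact hf s hs t ht.1 ht.2

section TimeSpace

variable {E F : Type*} [NormedAddCommGroup E] [NormedSpace ℝ E] [NormedAddCommGroup F]
  [NormedSpace ℝ F]

omit [NormedSpace ℝ E] in
theorem norm_prodMk_sub_prodMk_same (s t : ℝ) (x : E) : ‖((s, x) : ℝ × E) - (t, x)‖ = |s - t| := by
  simp [Prod.mk_sub_mk]

theorem norm_sub_le_of_norm_fderiv_le {f : E → F} {M : ℝ} (hf : Differentiable ℝ f)
    (h : ∀ p, ‖fderiv ℝ f p‖ ≤ M) (p q : E) : ‖f p - f q‖ ≤ M * ‖p - q‖ :=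
  convex_univ.norm_image_sub_le_of_norm_fderiv_le (fun x _ => hf x) (fun x _ => h x)
    (mem_univ q) (mem_univ p)

theorem fderiv_apply_eq_fderiv_uncurry_apply {φ : ℝ → E → F} {s : ℝ} {x : E}
    (hφ : DifferentiableAt ℝ (fun p : ℝ × E => φ p.1 p.2) (s, x)) (v : E) :
    fderiv ℝ (φ s) x v = fderiv ℝ (fun p : ℝ × E => φ p.1 p.2) (s, x) (0, v) :=
  DFunLike.congr_fun (hφ.hasFDerivAt.comp x (hasFDerivAt_prodMk_right s x)).fderiv v

variable {φ : ℝ → E → ℝ} {M : ℝ}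

theorem abs_sub_le_of_norm_iteratedFDeriv_one_le
    (hφ : Differentiable ℝ (fun p : ℝ × E => φ p.1 p.2))
    (h₁ : ∀ p, ‖iteratedFDeriv ℝ 1 (fun q : ℝ × E => φ q.1 q.2) p‖ ≤ M) (s t : ℝ) (x : E) :
    |φ s x - φ t x| ≤ M * |s - t| := by
  simpa [norm_prodMk_sub_prodMk_same] using
    norm_sub_le_of_norm_fderiv_le hφ (by simpa using h₁) (s, x) (t, x)

theorem abs_le_of_norm_iteratedFDeriv_one_le
    (hφ : Differentiable ℝ (fun p : ℝ × E => φ p.1 p.2))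
    (h₁ : ∀ p, ‖iteratedFDeriv ℝ 1 (fun q : ℝ × E => φ q.1 q.2) p‖ ≤ M) (s : ℝ) (x : E) :
    |φ s x| ≤ |φ 0 0| + M * (|s| + ‖x‖) := by
  have hM : 0 ≤ M := (norm_nonneg _).trans (h₁ 0)
  have h := norm_sub_le_of_norm_fderiv_le hφ (by simpa using h₁) (s, x) 0
  simp only [sub_zero, Prod.fst_zero, Prod.snd_zero, Prod.norm_mk, Real.norm_eq_abs] at h
  have := abs_sub_abs_le_abs_sub (φ s x) (φ 0 0)
  nlinarith [max_le_add_of_nonneg (abs_nonneg s) (norm_nonneg x)]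

theorem abs_fderiv_apply_le
    (hφ : Differentiable ℝ (fun p : ℝ × E => φ p.1 p.2))
    (h₁ : ∀ p, ‖iteratedFDeriv ℝ 1 (fun q : ℝ × E => φ q.1 q.2) p‖ ≤ M) (s : ℝ) (x v : E) :
    |fderiv ℝ (φ s) x v| ≤ M * ‖v‖ := by
  rw [fderiv_apply_eq_fderiv_uncurry_apply (hφ _), ← Real.norm_eq_abs]
  refine (ContinuousLinearMap.le_opNorm _ _).trans ?_
  simp only [Prod.norm_mk, norm_zero, max_eq_right (norm_nonneg v)]
  exact mul_le_mul_of_nonneg_right (by simpa using h₁ (s, x)) (norm_nonneg v)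

theorem abs_fderiv_apply_sub_le
    (hφ : ContDiff ℝ 2 (fun p : ℝ × E => φ p.1 p.2))
    (h₂ : ∀ p, ‖iteratedFDeriv ℝ 2 (fun q : ℝ × E => φ q.1 q.2) p‖ ≤ M) (s t : ℝ) (x v : E) :
    |fderiv ℝ (φ s) x v - fderiv ℝ (φ t) x v| ≤ M * |s - t| * ‖v‖ := by
  have hdiff := hφ.differentiable (by norm_num)
  have hG : ∀ p, ‖fderiv ℝ (fderiv ℝ (fun q : ℝ × E => φ q.1 q.2)) p‖ ≤ M := fun p => by
    simpa [← norm_iteratedFDeriv_fderiv] using h₂ p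
  rw [fderiv_apply_eq_fderiv_uncurry_apply (hdiff _),
    fderiv_apply_eq_fderiv_uncurry_apply (hdiff _), ← sub_apply, ← Real.norm_eq_abs]
  refine (ContinuousLinearMap.le_opNorm _ _).trans ?_
  simp only [Prod.norm_mk, norm_zero, max_eq_right (norm_nonneg v)]
  refine mul_le_mul_of_nonneg_right ?_ (norm_nonneg v)
  simpa [norm_prodMk_sub_prodMk_same] using norm_sub_le_of_norm_fderiv_le
    ((hφ.fderiv_right (m := 1) (by norm_num)).differentiable (by norm_num)) hG (s, x) (t, x)

end TimeSpace

def algebraicEquationConstant (K L M T Φ : ℝ) : ℝ :=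
  1 + M + K * M ^ 2 + M * L * ((1 + M * L) * (1 + Φ + M * T + M) + 1)

theorem mul_add_mul_le_algebraicEquationConstant {K L M T Φ δ r u v w y' : ℝ} (hK : 0 ≤ K)
    (hL : 0 ≤ L) (hM : 0 ≤ M) (hδ : 0 ≤ δ) (hr : 0 ≤ r) (hu : 0 ≤ u) (hv : 0 ≤ v) (hw : 0 ≤ w)
    (hΦ : 0 ≤ Φ + M * T) (hy' : y' ≤ v + Φ + M * (T + u)) :
    M * (r + K * (M * δ)) + M * δ * (L * ((1 + M * L) * (1 + u + y') + w)) ≤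
      algebraicEquationConstant K L M T Φ * δ * (1 + u + v + w) +
        algebraicEquationConstant K L M T Φ * r := by
  set A := 1 + u + v + w
  set B := 1 + Φ + M * T + M
  have hA : 1 ≤ A := by simp only [A]; linarith
  have hδA : 0 ≤ δ * A := mul_nonneg hδ (zero_le_one.trans hA)
  have hB : 0 ≤ (1 + M * L) * B + 1 := by
    have : 0 ≤ B := by simp only [B]; linarith
    positivity
  have hP : 1 + u + y' ≤ B * A := by
    have : B * A = A + (Φ + M * T) * A + M * A := by ring
    nlinarith [mul_nonneg hΦ (sub_nonneg.2 hA), mul_nonneg hM (add_nonneg hv hw)]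
  have hKM : M * (K * (M * δ)) ≤ K * M ^ 2 * (δ * A) := by
    nlinarith [mul_nonneg (mul_nonneg hK hM) (mul_nonneg hM hδ)]
  have hLM : M * δ * (L * ((1 + M * L) * (1 + u + y') + w)) ≤
      M * L * ((1 + M * L) * B + 1) * (δ * A) :=
    calc _ ≤ M * δ * (L * ((1 + M * L) * (B * A) + A)) := by gcongr; simp only [A]; linarith
      _ = _ := by ring
  have hC : algebraicEquationConstant K L M T Φ =
      1 + M + K * M ^ 2 + M * L * ((1 + M * L) * B + 1) := rfl
  rw [hC]
  linarith [mul_nonneg hM hδA, mul_nonneg (mul_nonneg hK (sq_nonneg M)) hr,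
    mul_nonneg (mul_nonneg (mul_nonneg hM hL) hB) hr]

theorem norm_sub_le_of_eq_add_smul_of_time_modulus {X V : Type*} [NormedAddCommGroup X]
    [NormedAddCommGroup V] [InnerProductSpace ℝ V]
    {b : ℝ → X → ℝ → V → V} {a ψ : ℝ → X → ℝ} {ρ : ℝ → ℝ} {T K L M Φ : ℝ}
    (hK : 0 ≤ K) (hL : 0 ≤ L) (hM : 0 ≤ M)
    (hb_lip : ∀ t ∈ Icc 0 T, ∀ x y y' z, ‖b t x y z - b t x y' z‖ ≤ K * |y - y'|)
    (hb_growth : ∀ t ∈ Icc 0 T, ∀ x y z, ‖b t x y z‖ ≤ L * (1 + ‖x‖ + |y| + ‖z‖))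
    (hb_diss : ∀ t ∈ Icc 0 T, ∀ x y, Dissipative (b t x y))
    (hb_time : ∀ s₁ ∈ Icc 0 T, ∀ s₂ ∈ Icc 0 T, ∀ x y z,
      ‖b s₂ x y z - b s₁ x y z‖ ≤ ρ |s₁ - s₂|)
    (ha_nonneg : ∀ s ∈ Icc 0 T, ∀ x, 0 ≤ a s x) (ha_le : ∀ s x, a s x ≤ M)
    (ha_sub : ∀ s t x, |a s x - a t x| ≤ M * |s - t|)
    (hψ_sub : ∀ s t x, |ψ s x - ψ t x| ≤ M * |s - t|)
    (hψ : ∀ s x, |ψ s x| ≤ Φ + M * (|s| + ‖x‖)) :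
    ∀ s₁ ∈ Icc 0 T, ∀ s₂ ∈ Icc 0 T, ∀ x y ζ z₁ z₂,
      z₁ = ζ + a s₁ x • b s₁ x (y + ψ s₁ x) z₁ → z₂ = ζ + a s₂ x • b s₂ x (y + ψ s₂ x) z₂ →
      ‖z₁ - z₂‖ ≤ algebraicEquationConstant K L M T Φ * |s₁ - s₂| * (1 + ‖x‖ + |y| + ‖ζ‖) +
        algebraicEquationConstant K L M T Φ * ρ |s₁ - s₂| := by
  intro s₁ hs₁ s₂ hs₂ x y ζ z₁ z₂ hz₁ hz₂
  set δ := |s₁ - s₂|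
  have hfg : ∀ z, ‖b s₁ x (y + ψ s₁ x) z - b s₂ x (y + ψ s₂ x) z‖ ≤ ρ δ + K * (M * δ) := fun z =>
    calc _ ≤ ‖b s₁ x (y + ψ s₁ x) z - b s₂ x (y + ψ s₁ x) z‖ +
          ‖b s₂ x (y + ψ s₁ x) z - b s₂ x (y + ψ s₂ x) z‖ := norm_sub_le_norm_sub_add_norm_sub _ _ _
      _ ≤ ρ δ + K * (M * δ) := by
        gcongr
        · rw [norm_sub_rev]
          exact hb_time s₁ hs₁ s₂ hs₂ x _ z
        · refine (hb_lip s₂ hs₂ x _ _ z).trans (mul_le_mul_of_nonneg_left ?_ hK)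
          simpa using hψ_sub s₁ s₂ x
  have hz := (hb_diss s₁ hs₁ x _).norm_sub_le_of_perturbation (hb_diss s₂ hs₂ x _)
    (ha_nonneg s₁ hs₁ x) (ha_le s₁ x) (ha_nonneg s₂ hs₂ x) (ha_le s₂ x) (ha_sub s₁ s₂ x) hL hfg
    (hb_growth s₂ hs₂ x _) hz₁ hz₂
  have hψT : ∀ s ∈ Icc 0 T, ∀ x, |ψ s x| ≤ Φ + M * (T + ‖x‖) := fun s hs x =>
    (hψ s x).trans (by rw [abs_of_nonneg hs.1]; gcongr; exact hs.2)
  have hΦ : 0 ≤ Φ + M * T := by simpa using (abs_nonneg _).trans (hψT s₁ hs₁ 0)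
  refine hz.trans (mul_add_mul_le_algebraicEquationConstant hK hL hM (abs_nonneg _)
    ((norm_nonneg _).trans (hb_time s₁ hs₁ s₂ hs₂ x y ζ)) (norm_nonneg x) (abs_nonneg y)
    (norm_nonneg ζ) hΦ ?_)
  linarith [abs_add_le y (ψ s₂ x), hψT s₂ hs₂ x]

/-- **Proposition 4.1, time continuity (under assumption (B7)).**
In the algebraic-equation setting, assume moreover that the first row `σ₁` of `σ` is continuous
in time uniformly in the other variables, in the sense that there is a modulus `ρ` with
`ρ(δ) → 0` as `δ ↓ 0` bounding the time increments of `σ₁`.  Then there is a constant `C`,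
depending only on the data, such that whenever `z₁, z₂` solve the algebraic equation at times
`s₁, s₂` (with the same `x, y, ζ`), one has
`‖z₁ - z₂‖ ≤ C * |s₁ - s₂| * (1 + ‖x‖ + |y| + ‖ζ‖) + C * ρ(|s₁ - s₂|)`.
In particular, any selection `h` of solutions of the algebraic equation is continuous in `s`
on `[0, T]`.  Dimensions `n ≥ 1` and `d ≥ 1` are encoded as `n + 1` and `d + 1`. -/
theorem algebraic_equation_time_continuity
    (n d : ℕ) (T K L M β₂ : ℝ)
    (hT : 0 < T) (hK : 0 ≤ K) (hL : 0 ≤ L) (hM : 0 ≤ M) (hβ₂ : 0 < β₂)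
    (σ : ℝ → EuclideanSpace ℝ (Fin (n + 1)) → ℝ → EuclideanSpace ℝ (Fin (d + 1)) →
      Fin (n + 1) → EuclideanSpace ℝ (Fin (d + 1)))
    (φ : ℝ → EuclideanSpace ℝ (Fin (n + 1)) → ℝ)
    (hσLip : ∀ t ∈ Set.Icc (0 : ℝ) T, ∀ x x' y y' z z',
      ‖σ t x y z - σ t x' y' z'‖ ≤ K * (‖x - x'‖ + |y - y'| + ‖z - z'‖))
    (hσGrowth : ∀ t ∈ Set.Icc (0 : ℝ) T, ∀ x y z,
      ‖σ t x y z‖ ≤ L * (1 + ‖x‖ + |y| + ‖z‖))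
    (hσ₁Diss : ∀ t ∈ Set.Icc (0 : ℝ) T, ∀ x y z z',
      ⟪σ t x y z 0 - σ t x y z' 0, z - z'⟫ ≤ -β₂ * ‖z - z'‖ ^ 2)
    (hφ : ContDiff ℝ 3 (fun p : ℝ × EuclideanSpace ℝ (Fin (n + 1)) => φ p.1 p.2))
    (hφBound : ∀ i : ℕ, 1 ≤ i → i ≤ 3 →
      ∀ p : ℝ × EuclideanSpace ℝ (Fin (n + 1)),
        ‖iteratedFDeriv ℝ i (fun q : ℝ × EuclideanSpace ℝ (Fin (n + 1)) => φ q.1 q.2) p‖ ≤ M)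
    (hφMono : ∀ s ∈ Set.Icc (0 : ℝ) T, ∀ x : EuclideanSpace ℝ (Fin (n + 1)),
      0 ≤ fderiv ℝ (φ s) x (EuclideanSpace.single 0 1) ∧
      ∀ i : Fin (n + 1), i ≠ 0 → fderiv ℝ (φ s) x (EuclideanSpace.single i 1) = 0)
    -- assumption (B7): uniform continuity of `σ₁` in time, with modulus `ρ`
    (ρ : ℝ → ℝ)
    (hρ : ∀ δ : ℝ, 0 ≤ δ → ∀ s₁ ∈ Set.Icc (0 : ℝ) T, ∀ s₂ ∈ Set.Icc (0 : ℝ) T,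
      |s₁ - s₂| ≤ δ → ∀ x y z, ‖σ s₂ x y z 0 - σ s₁ x y z 0‖ ≤ ρ δ)
    (hρ0 : Filter.Tendsto ρ (nhdsWithin 0 (Set.Ioi 0)) (nhds 0)) :
    (∃ C : ℝ, 0 < C ∧ ∀ s₁ ∈ Set.Icc (0 : ℝ) T, ∀ s₂ ∈ Set.Icc (0 : ℝ) T,
      ∀ (x : EuclideanSpace ℝ (Fin (n + 1))) (y : ℝ)
        (ζ z₁ z₂ : EuclideanSpace ℝ (Fin (d + 1))),
      z₁ = ζ + fderiv ℝ (φ s₁) x (EuclideanSpace.single 0 1) •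
          σ s₁ x (y + φ s₁ x) z₁ 0 →
      z₂ = ζ + fderiv ℝ (φ s₂) x (EuclideanSpace.single 0 1) •
          σ s₂ x (y + φ s₂ x) z₂ 0 →
      ‖z₁ - z₂‖ ≤ C * |s₁ - s₂| * (1 + ‖x‖ + |y| + ‖ζ‖) + C * ρ |s₁ - s₂|) ∧
    ∀ (x : EuclideanSpace ℝ (Fin (n + 1))) (y : ℝ) (ζ : EuclideanSpace ℝ (Fin (d + 1)))
      (h : ℝ → EuclideanSpace ℝ (Fin (d + 1))),
      (∀ s ∈ Set.Icc (0 : ℝ) T,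
        h s = ζ + fderiv ℝ (φ s) x (EuclideanSpace.single 0 1) •
          σ s x (y + φ s x) (h s) 0) →
      ContinuousOn h (Set.Icc (0 : ℝ) T) := by
  have hφ₂ : ContDiff ℝ 2 (fun p : ℝ × EuclideanSpace ℝ (Fin (n + 1)) => φ p.1 p.2) :=
    hφ.of_le (by norm_num)
  have hdiff := hφ₂.differentiable (by norm_num)
  have h₁ := hφBound 1 le_rfl (by norm_num)
  have he₀ : ‖EuclideanSpace.single (0 : Fin (n + 1)) (1 : ℝ)‖ = 1 := by simp
  have key := norm_sub_le_of_eq_add_smul_of_time_modulus (b := fun t x y z => σ t x y z 0)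
    (a := fun s x => fderiv ℝ (φ s) x (EuclideanSpace.single 0 1)) hK hL hM
    (fun t ht x y y' z => by simpa using (norm_le_pi_norm _ 0).trans (hσLip t ht x x y y' z z))
    (fun t ht x y z => (norm_le_pi_norm _ 0).trans (hσGrowth t ht x y z))
    (fun t ht x y => .of_inner_le_neg_mul hβ₂.le (hσ₁Diss t ht x y))
    (fun s₁ hs₁ s₂ hs₂ => hρ _ (abs_nonneg _) s₁ hs₁ s₂ hs₂ le_rfl)
    (fun s hs x => (hφMono s hs x).1)
    (fun s x => ((le_abs_self _).trans (abs_fderiv_apply_le hdiff h₁ s x _)).trans_eq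
      (by rw [he₀, mul_one]))
    (fun s t x => (abs_fderiv_apply_sub_le hφ₂ (hφBound 2 (by norm_num) (by norm_num)) s t x
      _).trans_eq (by rw [he₀, mul_one]))
    (abs_sub_le_of_norm_iteratedFDeriv_one_le hdiff h₁)
    (abs_le_of_norm_iteratedFDeriv_one_le hdiff h₁)
  set C := algebraicEquationConstant K L M T |φ 0 0|
  have hC : 0 < C := by unfold C algebraicEquationConstant; positivity
  refine ⟨⟨C, hC, key⟩, fun x y ζ h hh => continuousOn_of_dist_le_of_tendsto
    (ω := fun δ => C * δ * (1 + ‖x‖ + |y| + ‖ζ‖) + C * ρ δ) ?_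
    fun s hs t ht _ => (dist_eq_norm _ _).trans_le (key t ht s hs x y ζ _ _ (hh t ht) (hh s hs))⟩
  have hlin : Tendsto (fun δ : ℝ => C * δ * (1 + ‖x‖ + |y| + ‖ζ‖)) (𝓝 0) (𝓝 0) := by
    simpa using (by fun_prop : Continuous fun δ : ℝ => C * δ * (1 + ‖x‖ + |y| + ‖ζ‖)).tendsto 0
  simpa using (tendsto_nhdsWithin_of_tendsto_nhds hlin).add (hρ0.const_mul C)
end

section
/- In the algebraic-equation setting, there exists a constant C, depending only on K, L, M, β₂, T and sup_{s∈[0,T]}|φ(s,0)|, with the following property: for all s ∈ [0,T], x, x̄ ∈ ℝⁿ, y ∈ ℝ and ζ ∈ ℝ^d, if ẑ, z̄ ∈ ℝ^d satisfy ẑ = ζ + D_xφ(s,x)·σ(s, x, y + φ(s,x), ẑ) and z̄ = ζ + D_xφ(s,x̄)·σ(s, x̄, y + φ(s,x̄), z̄), then |z̄ − ẑ| ≤ C(1 + |x̄|)|x̄ − x| + C|x̄ − x|(|y| + |z̄|). -/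
open RealInnerProductSpace Function

/-! Only the first row `σ₁` enters the equation, with coefficient `∂₁φ ≥ 0`. Subtracting the two
equations and pairing with `zBar - zHat`, the term in which only `z` varies has a sign by the
dissipativity of `σ₁`, so `‖zBar - zHat‖` is bounded by the residual of `zBar` in the equation for
`zHat`. That residual only involves the change of `x`: it is controlled by the Lipschitz bounds on
`σ`, `φ` and `∂₁φ` (the last two from the bounds on the derivatives of `φ`) and by the growth bound
on `σ`. -/

section Dissipative

variable {E : Type*} [NormedAddCommGroup E] [InnerProductSpace ℝ E] {f : E → E} {a : ℝ} {ζ u : E}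

theorem norm_sub_le_norm_residual_of_dissipative (hf : ∀ u v, ⟪f u - f v, u - v⟫ ≤ 0)
    (ha : 0 ≤ a) (hu : u = ζ + a • f u) (v : E) : ‖v - u‖ ≤ ‖v - (ζ + a • f v)‖ := by
  set r := v - (ζ + a • f v)
  have hvu : v - u = r + a • (f v - f u) := by
    conv_lhs => rw [hu]
    simp only [r]; module
  have hsq : ‖v - u‖ ^ 2 ≤ ‖r‖ * ‖v - u‖ :=
    calc ‖v - u‖ ^ 2 = ⟪r, v - u⟫ + a * ⟪f v - f u, v - u⟫ := by
          rw [← real_inner_self_eq_norm_sq]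
          nth_rewrite 1 [hvu]
          rw [inner_add_left, real_inner_smul_left]
      _ ≤ ‖r‖ * ‖v - u‖ + 0 :=
          add_le_add (real_inner_le_norm _ _) (mul_nonpos_of_nonneg_of_nonpos ha (hf v u))
      _ = ‖r‖ * ‖v - u‖ := add_zero _
  nlinarith [norm_nonneg r, norm_nonneg (v - u)]

theorem norm_sub_le_of_dissipative_of_eq_add_smul (hf : ∀ u v, ⟪f u - f v, u - v⟫ ≤ 0)
    (ha : 0 ≤ a) (hu : u = ζ + a • f u) {g : E → E} {a' : ℝ} {v : E} (hv : v = ζ + a' • g v) :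
    ‖v - u‖ ≤ ‖a‖ * ‖g v - f v‖ + ‖a' - a‖ * ‖g v‖ :=
  calc ‖v - u‖ ≤ ‖v - (ζ + a • f v)‖ := norm_sub_le_norm_residual_of_dissipative hf ha hu v
    _ = ‖a • (g v - f v) + (a' - a) • g v‖ := by
        nth_rewrite 1 [hv]
        congr 1; module
    _ ≤ ‖a‖ * ‖g v - f v‖ + ‖a' - a‖ * ‖g v‖ :=
        (norm_add_le _ _).trans_eq (by rw [norm_smul, norm_smul])

end Dissipative

theorem norm_fderiv_sub_le_of_norm_iteratedFDeriv_two_le {E F : Type*} [NormedAddCommGroup E]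
    [NormedSpace ℝ E] [NormedAddCommGroup F] [NormedSpace ℝ F] {f : E → F} {M : ℝ}
    (hf : ContDiff ℝ 2 f) (hM : ∀ p, ‖iteratedFDeriv ℝ 2 f p‖ ≤ M) (p q : E) :
    ‖fderiv ℝ f p - fderiv ℝ f q‖ ≤ M * ‖p - q‖ := by
  have hdiff : Differentiable ℝ (fderiv ℝ f) :=
    (hf.fderiv_right (m := 1) le_rfl).differentiable one_ne_zero
  refine convex_univ.norm_image_sub_le_of_norm_fderiv_le (fun r _ => hdiff r) (fun r _ => ?_)
    trivial trivial
  rw [← norm_iteratedFDeriv_one, norm_iteratedFDeriv_fderiv]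
  exact hM r

section PartialDerivative

variable {E G H : Type*} [NormedAddCommGroup E] [NormedSpace ℝ E] [NormedAddCommGroup G]
  [NormedSpace ℝ G] [NormedAddCommGroup H] [NormedSpace ℝ H] {φ : E → G → H} {M : ℝ}

theorem fderiv_eq_fderiv_uncurry_comp_inr {s : E} {x : G}
    (hφ : DifferentiableAt ℝ (uncurry φ) (s, x)) :
    fderiv ℝ (φ s) x = (fderiv ℝ (uncurry φ) (s, x)).comp (ContinuousLinearMap.inr ℝ E G) :=
  (hφ.hasFDerivAt.comp x (hasFDerivAt_prodMk_right s x)).fderiv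

theorem norm_fderiv_le_of_norm_fderiv_uncurry_le (hφ : Differentiable ℝ (uncurry φ))
    (hM : ∀ p, ‖fderiv ℝ (uncurry φ) p‖ ≤ M) (s : E) (x : G) : ‖fderiv ℝ (φ s) x‖ ≤ M := by
  rw [fderiv_eq_fderiv_uncurry_comp_inr (hφ _)]
  exact (ContinuousLinearMap.opNorm_comp_le _ _).trans <|
    (mul_le_of_le_one_right (norm_nonneg _) (ContinuousLinearMap.norm_inr_le_one ℝ E G)).trans
      (hM _)

theorem norm_fderiv_sub_le_of_lipschitz_fderiv_uncurry (hφ : Differentiable ℝ (uncurry φ))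
    (hM : ∀ p q, ‖fderiv ℝ (uncurry φ) p - fderiv ℝ (uncurry φ) q‖ ≤ M * ‖p - q‖)
    (s : E) (x x' : G) : ‖fderiv ℝ (φ s) x' - fderiv ℝ (φ s) x‖ ≤ M * ‖x' - x‖ := by
  rw [fderiv_eq_fderiv_uncurry_comp_inr (hφ _), fderiv_eq_fderiv_uncurry_comp_inr (hφ _),
    ← ContinuousLinearMap.sub_comp]
  have hsection : ‖((s, x') : E × G) - (s, x)‖ = ‖x' - x‖ := by
    rw [← dist_eq_norm, ← dist_eq_norm, dist_prod_same_left]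
  exact (ContinuousLinearMap.opNorm_comp_le _ _).trans <|
    (mul_le_of_le_one_right (norm_nonneg _) (ContinuousLinearMap.norm_inr_le_one ℝ E G)).trans
      (hsection ▸ hM _ _)

theorem norm_sub_le_of_norm_fderiv_uncurry_le (hφ : Differentiable ℝ (uncurry φ))
    (hM : ∀ p, ‖fderiv ℝ (uncurry φ) p‖ ≤ M) (s : E) (x x' : G) :
    ‖φ s x' - φ s x‖ ≤ M * ‖x' - x‖ :=
  convex_univ.norm_image_sub_le_of_norm_fderiv_le
    (fun _ _ => (hφ.comp (differentiable_const s |>.prodMk differentiable_id)) _)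
    (fun _ _ => norm_fderiv_le_of_norm_fderiv_uncurry_le hφ hM s _) trivial trivial

end PartialDerivative

section AlongGraph

variable {G V W : Type*} [SeminormedAddCommGroup G] [SeminormedAddCommGroup V]
  [SeminormedAddCommGroup W] {S : G → ℝ → V → W} {p : G → ℝ} {K L M B : ℝ}

theorem norm_sub_le_along_graph
    (hS : ∀ x x' y y' z z', ‖S x y z - S x' y' z'‖ ≤ K * (‖x - x'‖ + |y - y'| + ‖z - z'‖))
    (hK : 0 ≤ K) (hp : ∀ x x', ‖p x' - p x‖ ≤ M * ‖x' - x‖) (x x' : G) (y : ℝ) (z : V) :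
    ‖S x' (y + p x') z - S x (y + p x) z‖ ≤ K * (1 + M) * ‖x' - x‖ :=
  calc _ ≤ K * (‖x' - x‖ + |y + p x' - (y + p x)| + ‖z - z‖) := hS _ _ _ _ _ _
    _ ≤ K * (1 + M) * ‖x' - x‖ := by
        rw [add_sub_add_left_eq_sub, sub_self, norm_zero, ← Real.norm_eq_abs]
        nlinarith [hp x x']

theorem norm_le_along_graph (hS : ∀ x y z, ‖S x y z‖ ≤ L * (1 + ‖x‖ + |y| + ‖z‖)) (hL : 0 ≤ L)
    (hp : ∀ x x', ‖p x' - p x‖ ≤ M * ‖x' - x‖) (hp₀ : ‖p 0‖ ≤ B) (x : G) (y : ℝ) (z : V) :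
    ‖S x (y + p x) z‖ ≤ L * (1 + B + (1 + M) * ‖x‖ + |y| + ‖z‖) :=
  calc _ ≤ L * (1 + ‖x‖ + |y + p x| + ‖z‖) := hS _ _ _
    _ ≤ L * (1 + B + (1 + M) * ‖x‖ + |y| + ‖z‖) := by
        have hpx : ‖p x‖ ≤ B + M * ‖x‖ := by
          have := hp 0 x
          rw [sub_zero] at this
          linarith [norm_le_norm_add_norm_sub' (p x) (p 0)]
        gcongr L * ?_
        linarith [abs_add_le y (p x), Real.norm_eq_abs (p x)]

end AlongGraph

theorem algebraic_equation_spatial_lipschitz_general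
    (n d : ℕ) (T K L M β₂ : ℝ)
    (hK : 0 ≤ K) (hL : 0 ≤ L) (hM : 0 ≤ M) (hβ₂ : 0 < β₂)
    (σ : ℝ → EuclideanSpace ℝ (Fin (n + 1)) → ℝ → EuclideanSpace ℝ (Fin (d + 1)) →
      Fin (n + 1) → EuclideanSpace ℝ (Fin (d + 1)))
    (φ : ℝ → EuclideanSpace ℝ (Fin (n + 1)) → ℝ)
    (hσLip : ∀ t ∈ Set.Icc (0 : ℝ) T, ∀ x x' y y' z z',
      ‖σ t x y z - σ t x' y' z'‖ ≤ K * (‖x - x'‖ + |y - y'| + ‖z - z'‖))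
    (hσGrowth : ∀ t ∈ Set.Icc (0 : ℝ) T, ∀ x y z,
      ‖σ t x y z‖ ≤ L * (1 + ‖x‖ + |y| + ‖z‖))
    (hσ₁Diss : ∀ t ∈ Set.Icc (0 : ℝ) T, ∀ x y z z',
      ⟪σ t x y z 0 - σ t x y z' 0, z - z'⟫ ≤ -β₂ * ‖z - z'‖ ^ 2)
    (hφ : ContDiff ℝ 3 (fun p : ℝ × EuclideanSpace ℝ (Fin (n + 1)) => φ p.1 p.2))
    (hφBound : ∀ i : ℕ, 1 ≤ i → i ≤ 3 →
      ∀ p : ℝ × EuclideanSpace ℝ (Fin (n + 1)),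
        ‖iteratedFDeriv ℝ i (fun q : ℝ × EuclideanSpace ℝ (Fin (n + 1)) => φ q.1 q.2) p‖ ≤ M)
    (hφMono : ∀ s ∈ Set.Icc (0 : ℝ) T, ∀ x : EuclideanSpace ℝ (Fin (n + 1)),
      0 ≤ fderiv ℝ (φ s) x (EuclideanSpace.single 0 1) ∧
      ∀ i : Fin (n + 1), i ≠ 0 → fderiv ℝ (φ s) x (EuclideanSpace.single i 1) = 0) :
    ∃ C : ℝ, 0 < C ∧ ∀ s ∈ Set.Icc (0 : ℝ) T,
      ∀ (x x' : EuclideanSpace ℝ (Fin (n + 1))) (y : ℝ)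
        (ζ zHat zBar : EuclideanSpace ℝ (Fin (d + 1))),
      zHat = ζ + ∑ i : Fin (n + 1),
        fderiv ℝ (φ s) x (EuclideanSpace.single i 1) • σ s x (y + φ s x) zHat i →
      zBar = ζ + ∑ i : Fin (n + 1),
        fderiv ℝ (φ s) x' (EuclideanSpace.single i 1) • σ s x' (y + φ s x') zBar i →
      ‖zBar - zHat‖ ≤ C * (1 + ‖x'‖) * ‖x' - x‖ + C * ‖x' - x‖ * (|y| + ‖zBar‖) := by
  have hφdiff : Differentiable ℝ (uncurry φ) := hφ.differentiable (by norm_num)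
  have hφ₁ : ∀ p, ‖fderiv ℝ (uncurry φ) p‖ ≤ M := fun p => by
    rw [← norm_iteratedFDeriv_one]; exact hφBound 1 le_rfl (by norm_num) p
  have hφ₂ := norm_fderiv_sub_le_of_norm_iteratedFDeriv_two_le (hφ.of_le (by norm_num))
    (hφBound 2 (by norm_num) (by norm_num))
  obtain ⟨B, hB⟩ : ∃ B, ∀ s ∈ Set.Icc 0 T, ‖φ s 0‖ ≤ B :=
    isCompact_Icc.exists_bound_of_continuousOn
      (hφ.continuous.comp (continuous_id.prodMk continuous_const)).continuousOn
  set C := M * (K * (1 + M) + L * (1 + max B 0 + M)) + 1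
  refine ⟨C, by positivity, fun s hs x x' y ζ zHat zBar hHat hBar => ?_⟩
  have first_row : ∀ x z w, ∑ i : Fin (n + 1), fderiv ℝ (φ s) x (EuclideanSpace.single i 1) •
      σ s x w z i = fderiv ℝ (φ s) x (EuclideanSpace.single 0 1) • σ s x w z 0 :=
    fun x _ _ => Fintype.sum_eq_single 0 fun i hi => by rw [(hφMono s hs x).2 i hi, zero_smul]
  rw [first_row] at hHat hBar
  have he₀ : ‖(EuclideanSpace.single 0 1 : EuclideanSpace ℝ (Fin (n + 1)))‖ ≤ 1 := by simp
  have hφLip := norm_sub_le_of_norm_fderiv_uncurry_le hφdiff hφ₁ s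
  have hdiss : ∀ u v, ⟪σ s x (y + φ s x) u 0 - σ s x (y + φ s x) v 0, u - v⟫ ≤ 0 :=
    fun u v => (hσ₁Diss s hs x _ u v).trans (by nlinarith [sq_nonneg ‖u - v‖])
  calc ‖zBar - zHat‖ ≤ _ := norm_sub_le_of_dissipative_of_eq_add_smul
        (g := fun z => σ s x' (y + φ s x') z 0) hdiss (hφMono s hs x).1 hHat hBar
    _ ≤ M * (K * (1 + M) * ‖x' - x‖) +
          M * ‖x' - x‖ * (L * (1 + max B 0 + (1 + M) * ‖x'‖ + |y| + ‖zBar‖)) := by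
        gcongr
        · exact ((fderiv ℝ (φ s) x).le_of_opNorm_le_of_le
            (norm_fderiv_le_of_norm_fderiv_uncurry_le hφdiff hφ₁ s x) he₀).trans_eq (mul_one M)
        · exact (norm_le_pi_norm _ 0).trans
            (norm_sub_le_along_graph (hσLip s hs) hK hφLip x x' y zBar)
        · exact ((fderiv ℝ (φ s) x' - fderiv ℝ (φ s) x).le_of_opNorm_le_of_le
            (norm_fderiv_sub_le_of_lipschitz_fderiv_uncurry hφdiff hφ₂ s x x') he₀).trans_eq
            (mul_one _)
        · exact (norm_le_pi_norm _ 0).trans (norm_le_along_graph (hσGrowth s hs) hL hφLip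
            ((hB s hs).trans (le_max_left B 0)) x' y zBar)
    _ = ‖x' - x‖ * ((M * K * (1 + M) + M * L * (1 + max B 0)) + M * L * (1 + M) * ‖x'‖ +
          M * L * (|y| + ‖zBar‖)) := by ring
    _ ≤ ‖x' - x‖ * (C + C * ‖x'‖ + C * (|y| + ‖zBar‖)) := by
        gcongr ‖x' - x‖ * (?_ + ?_ * _ + ?_ * _)
        all_goals nlinarith [mul_nonneg hM hK, mul_nonneg hM hL, mul_nonneg (mul_nonneg hM hK) hM,
          mul_nonneg (mul_nonneg hM hL) hM, mul_nonneg (mul_nonneg hM hL) (le_max_right B 0)]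
    _ = C * (1 + ‖x'‖) * ‖x' - x‖ + C * ‖x' - x‖ * (|y| + ‖zBar‖) := by ring

/-- **Spatial-Lipschitz estimate for the algebraic equation (proof of Lemma 4.6).**
In the algebraic-equation setting, there is a constant `C`, depending only on the data, such
that if `zHat` solves the algebraic equation at `(s, x, y, ζ)` and `zBar` solves it at
`(s, x', y, ζ)`, then `‖zBar - zHat‖ ≤ C (1 + ‖x'‖) ‖x' - x‖ + C ‖x' - x‖ (|y| + ‖zBar‖)`.
Dimensions `n ≥ 1` and `d ≥ 1` are encoded as `n + 1` and `d + 1`; the matrix `σ` is encoded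
through its rows `σ t x y z i ∈ ℝ^d`. -/
theorem algebraic_equation_spatial_lipschitz
    (n d : ℕ) (T K L M β₂ : ℝ)
    (hT : 0 < T) (hK : 0 ≤ K) (hL : 0 ≤ L) (hM : 0 ≤ M) (hβ₂ : 0 < β₂)
    (σ : ℝ → EuclideanSpace ℝ (Fin (n + 1)) → ℝ → EuclideanSpace ℝ (Fin (d + 1)) →
      Fin (n + 1) → EuclideanSpace ℝ (Fin (d + 1)))
    (φ : ℝ → EuclideanSpace ℝ (Fin (n + 1)) → ℝ)
    (hσLip : ∀ t ∈ Set.Icc (0 : ℝ) T, ∀ x x' y y' z z',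
      ‖σ t x y z - σ t x' y' z'‖ ≤ K * (‖x - x'‖ + |y - y'| + ‖z - z'‖))
    (hσGrowth : ∀ t ∈ Set.Icc (0 : ℝ) T, ∀ x y z,
      ‖σ t x y z‖ ≤ L * (1 + ‖x‖ + |y| + ‖z‖))
    (hσ₁Diss : ∀ t ∈ Set.Icc (0 : ℝ) T, ∀ x y z z',
      ⟪σ t x y z 0 - σ t x y z' 0, z - z'⟫ ≤ -β₂ * ‖z - z'‖ ^ 2)
    (hφ : ContDiff ℝ 3 (fun p : ℝ × EuclideanSpace ℝ (Fin (n + 1)) => φ p.1 p.2))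
    (hφBound : ∀ i : ℕ, 1 ≤ i → i ≤ 3 →
      ∀ p : ℝ × EuclideanSpace ℝ (Fin (n + 1)),
        ‖iteratedFDeriv ℝ i (fun q : ℝ × EuclideanSpace ℝ (Fin (n + 1)) => φ q.1 q.2) p‖ ≤ M)
    (hφMono : ∀ s ∈ Set.Icc (0 : ℝ) T, ∀ x : EuclideanSpace ℝ (Fin (n + 1)),
      0 ≤ fderiv ℝ (φ s) x (EuclideanSpace.single 0 1) ∧
      ∀ i : Fin (n + 1), i ≠ 0 → fderiv ℝ (φ s) x (EuclideanSpace.single i 1) = 0) :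
    ∃ C : ℝ, 0 < C ∧ ∀ s ∈ Set.Icc (0 : ℝ) T,
      ∀ (x x' : EuclideanSpace ℝ (Fin (n + 1))) (y : ℝ)
        (ζ zHat zBar : EuclideanSpace ℝ (Fin (d + 1))),
      zHat = ζ + ∑ i : Fin (n + 1),
        fderiv ℝ (φ s) x (EuclideanSpace.single i 1) • σ s x (y + φ s x) zHat i →
      zBar = ζ + ∑ i : Fin (n + 1),
        fderiv ℝ (φ s) x' (EuclideanSpace.single i 1) • σ s x' (y + φ s x') zBar i →
      ‖zBar - zHat‖ ≤ C * (1 + ‖x'‖) * ‖x' - x‖ + C * ‖x' - x‖ * (|y| + ‖zBar‖) :=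
  algebraic_equation_spatial_lipschitz_general n d T K L M β₂ hK hL hM hβ₂ σ φ hσLip hσGrowth
    hσ₁Diss hφ hφBound hφMono
end

section
/- In the Case-2 setting, there exists a constant C, depending only on K, L, M, n, d, T and sup_{s∈[0,T]}|φ(s,0)|, such that for all (s,u) ∈ [0,T]×U, x, x̄ ∈ ℝⁿ, y ∈ ℝ and z ∈ ℝ^d: |L(s,x,y,z,u) − L(s,x̄,y,z,u)| ≤ C(1 + |x̄|² + |y|² + |z|²)·(|x − x̄| + |x − x̄|²). -/
/-!
Write `Φ (s, x) = φ s x`. Each `x`-dependence of `L` enters either through a partial derivative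
of `Φ` of order at most two, which is bounded by `M` and `M`-Lipschitz in `x` because the
derivatives of order at most three are bounded, or through a coefficient evaluated at
`(x, y + φ s x, z)`, which is `K (1 + M)`-Lipschitz in `x` and, since
`|φ s x| ≤ sup |φ (·, 0)| + M ‖x‖`, grows linearly in `(x, y, z)`. Splitting every product as
`a c - a' c' = (a - a') c + a' (c - c')`, the worst term `⟪σᵢ, σⱼ⟫ ∂ᵢ∂ⱼφ` is of order
`(1 + ‖x'‖ + |y| + ‖z‖)² ‖x - x'‖ + ‖x - x'‖²`, and `(1 + a + b + c)² ≤ 4 (1 + a² + b² + c²)`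
gives the stated form.
-/

open RealInnerProductSpace Function

theorem norm_sub_le_of_norm_iteratedFDeriv_one_le {F G : Type*}
    [NormedAddCommGroup F] [NormedSpace ℝ F] [NormedAddCommGroup G] [NormedSpace ℝ G]
    {g : ℝ × F → G} {M : ℝ} (hg : Differentiable ℝ g)
    (hb : ∀ p, ‖iteratedFDeriv ℝ 1 g p‖ ≤ M) (s : ℝ) (x x' : F) :
    ‖g (s, x) - g (s, x')‖ ≤ M * ‖x - x'‖ := by
  simpa using convex_univ.norm_image_sub_le_of_norm_fderiv_le (fun p _ => hg p)
    (fun p _ => (norm_iteratedFDeriv_one g).symm.trans_le (hb p))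
    (Set.mem_univ (s, x')) (Set.mem_univ (s, x))

section Slices

variable {E : Type*} [NormedAddCommGroup E] [NormedSpace ℝ E] {φ : ℝ → E → ℝ} {M : ℝ}

theorem deriv_slice_eq {s : ℝ} {x : E} (hφ : DifferentiableAt ℝ (uncurry φ) (s, x)) :
    deriv (fun t => φ t x) s = fderiv ℝ (uncurry φ) (s, x) (1, 0) := by
  have h := hφ.hasFDerivAt.comp_hasDerivAt s ((hasDerivAt_id' s).prodMk (hasDerivAt_const s x))
  exact h.deriv

theorem fderiv_slice_eq {s : ℝ} {x : E} (hφ : DifferentiableAt ℝ (uncurry φ) (s, x)) :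
    fderiv ℝ (φ s) x = (fderiv ℝ (uncurry φ) (s, x)).comp (.inr ℝ ℝ E) :=
  (hφ.hasFDerivAt.comp x (hasFDerivAt_prodMk_right s x)).fderiv

theorem fderiv_fderiv_slice_eq (hφ : ContDiff ℝ 2 (uncurry φ)) (s : ℝ) (x v w : E) :
    fderiv ℝ (fun q => fderiv ℝ (φ s) q v) x w
      = fderiv ℝ (fderiv ℝ (uncurry φ)) (s, x) (0, w) (0, v) := by
  have hφ₁ : Differentiable ℝ (uncurry φ) := hφ.differentiable (by norm_num)
  have hD : Differentiable ℝ (fderiv ℝ (uncurry φ)) :=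
    (hφ.fderiv_right (m := 1) (by norm_num)).differentiable (by norm_num)
  have hslice : (fun q => fderiv ℝ (φ s) q v) = fun q => fderiv ℝ (uncurry φ) (s, q) (0, v) := by
    funext q
    simp [fderiv_slice_eq (hφ₁ (s, q))]
  have h : HasFDerivAt (fun q => fderiv ℝ (uncurry φ) (s, q) (0, v))
      (((fderiv ℝ (fderiv ℝ (uncurry φ)) (s, x)).comp (.inr ℝ ℝ E)).flip (0, v)) x :=
    (((hD (s, x)).hasFDerivAt.comp x (hasFDerivAt_prodMk_right s x)).clm_apply
      (hasFDerivAt_const _ x)).congr_fderiv (by ext; simp)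
  rw [hslice, h.fderiv]
  simp

theorem abs_slice_sub_le (hφ : Differentiable ℝ (uncurry φ))
    (h₁ : ∀ p, ‖iteratedFDeriv ℝ 1 (uncurry φ) p‖ ≤ M) (s : ℝ) (x x' : E) :
    |φ s x - φ s x'| ≤ M * ‖x - x'‖ :=
  norm_sub_le_of_norm_iteratedFDeriv_one_le hφ h₁ s x x'

theorem abs_slice_le {s S : ℝ} (hφ : Differentiable ℝ (uncurry φ))
    (h₁ : ∀ p, ‖iteratedFDeriv ℝ 1 (uncurry φ) p‖ ≤ M) (hφ₀ : |φ s 0| ≤ S) (x : E) :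
    |φ s x| ≤ S + M * ‖x‖ := by
  have := abs_slice_sub_le hφ h₁ s x 0
  rw [sub_zero] at this
  linarith [abs_sub_abs_le_abs_sub (φ s x) (φ s 0)]

theorem abs_deriv_slice_sub_le (hφ : ContDiff ℝ 2 (uncurry φ))
    (h₂ : ∀ p, ‖iteratedFDeriv ℝ 2 (uncurry φ) p‖ ≤ M) (s : ℝ) (x x' : E) :
    |deriv (fun t => φ t x) s - deriv (fun t => φ t x') s| ≤ M * ‖x - x'‖ := by
  have hφ₁ : Differentiable ℝ (uncurry φ) := hφ.differentiable (by norm_num)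
  have hlip := norm_sub_le_of_norm_iteratedFDeriv_one_le
    ((hφ.fderiv_right (m := 1) (by norm_num)).differentiable (by norm_num))
    (fun p => norm_iteratedFDeriv_fderiv.trans_le (h₂ p)) s x x'
  rw [deriv_slice_eq (hφ₁ _), deriv_slice_eq (hφ₁ _), ← sub_apply, ← Real.norm_eq_abs]
  simpa using (ContinuousLinearMap.le_opNorm _ ((1 : ℝ), (0 : E))).trans
    (mul_le_mul_of_nonneg_right hlip (norm_nonneg _))

theorem abs_fderiv_slice_apply_le (hφ : Differentiable ℝ (uncurry φ))
    (h₁ : ∀ p, ‖iteratedFDeriv ℝ 1 (uncurry φ) p‖ ≤ M) (s : ℝ) (x v : E) :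
    |fderiv ℝ (φ s) x v| ≤ M * ‖v‖ := by
  rw [fderiv_slice_eq (hφ _), ← Real.norm_eq_abs]
  calc _ ≤ ‖fderiv ℝ (uncurry φ) (s, x)‖ * ‖((0 : ℝ), v)‖ :=
        (fderiv ℝ (uncurry φ) (s, x)).le_opNorm _
    _ ≤ M * ‖v‖ := by
      rw [← norm_iteratedFDeriv_one]
      simpa using mul_le_mul_of_nonneg_right (h₁ (s, x)) (norm_nonneg v)

theorem abs_fderiv_slice_apply_sub_le (hφ : ContDiff ℝ 2 (uncurry φ))
    (h₂ : ∀ p, ‖iteratedFDeriv ℝ 2 (uncurry φ) p‖ ≤ M) (s : ℝ) (x x' v : E) :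
    |fderiv ℝ (φ s) x v - fderiv ℝ (φ s) x' v| ≤ M * ‖x - x'‖ * ‖v‖ := by
  have hφ₁ : Differentiable ℝ (uncurry φ) := hφ.differentiable (by norm_num)
  have hlip := norm_sub_le_of_norm_iteratedFDeriv_one_le
    ((hφ.fderiv_right (m := 1) (by norm_num)).differentiable (by norm_num))
    (fun p => norm_iteratedFDeriv_fderiv.trans_le (h₂ p)) s x x'
  rw [fderiv_slice_eq (hφ₁ _), fderiv_slice_eq (hφ₁ _), ← Real.norm_eq_abs]
  calc _ = ‖(fderiv ℝ (uncurry φ) (s, x) - fderiv ℝ (uncurry φ) (s, x')) ((0 : ℝ), v)‖ := rfl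
    _ ≤ _ * ‖((0 : ℝ), v)‖ := ContinuousLinearMap.le_opNorm _ _
    _ ≤ M * ‖x - x'‖ * ‖v‖ := by simpa using mul_le_mul_of_nonneg_right hlip (norm_nonneg v)

theorem abs_fderiv_fderiv_slice_apply_le (hφ : ContDiff ℝ 2 (uncurry φ))
    (h₂ : ∀ p, ‖iteratedFDeriv ℝ 2 (uncurry φ) p‖ ≤ M) (s : ℝ) (x v w : E) :
    |fderiv ℝ (fun q => fderiv ℝ (φ s) q v) x w| ≤ M * ‖w‖ * ‖v‖ := by
  have hbound : ‖fderiv ℝ (fderiv ℝ (uncurry φ)) (s, x)‖ ≤ M := by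
    rw [← norm_iteratedFDeriv_one, norm_iteratedFDeriv_fderiv]
    exact h₂ _
  rw [fderiv_fderiv_slice_eq hφ, ← Real.norm_eq_abs]
  calc _ ≤ _ * ‖((0 : ℝ), w)‖ * ‖((0 : ℝ), v)‖ := ContinuousLinearMap.le_opNorm₂ _ _ _
    _ ≤ M * ‖w‖ * ‖v‖ := by simp only [Prod.norm_mk, norm_zero, norm_nonneg, max_eq_right]; gcongr

theorem abs_fderiv_fderiv_slice_apply_sub_le (hφ : ContDiff ℝ 3 (uncurry φ))
    (h₃ : ∀ p, ‖iteratedFDeriv ℝ 3 (uncurry φ) p‖ ≤ M) (s : ℝ) (x x' v w : E) :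
    |fderiv ℝ (fun q => fderiv ℝ (φ s) q v) x w - fderiv ℝ (fun q => fderiv ℝ (φ s) q v) x' w|
      ≤ M * ‖x - x'‖ * ‖w‖ * ‖v‖ := by
  have hlip := norm_sub_le_of_norm_iteratedFDeriv_one_le
    ((hφ.fderiv_right (m := 2) (by norm_num)).fderiv_right (m := 1) (by norm_num)
      |>.differentiable (by norm_num))
    (fun p => (norm_iteratedFDeriv_fderiv.trans norm_iteratedFDeriv_fderiv).trans_le (h₃ p))
    s x x'
  rw [fderiv_fderiv_slice_eq (hφ.of_le (by norm_num)),
    fderiv_fderiv_slice_eq (hφ.of_le (by norm_num)), ← Real.norm_eq_abs]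
  calc _ = ‖(fderiv ℝ (fderiv ℝ (uncurry φ)) (s, x) - fderiv ℝ (fderiv ℝ (uncurry φ)) (s, x'))
        ((0 : ℝ), w) ((0 : ℝ), v)‖ := rfl
    _ ≤ _ * ‖((0 : ℝ), w)‖ * ‖((0 : ℝ), v)‖ := ContinuousLinearMap.le_opNorm₂ _ _ _
    _ ≤ M * ‖x - x'‖ * ‖w‖ * ‖v‖ := by
        simp only [Prod.norm_mk, norm_zero, norm_nonneg, max_eq_right]
        gcongr

end Slices

theorem abs_sum_mul_sub_sum_mul_le {ι : Type*} [Fintype ι] {a a' c c' : ι → ℝ}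
    {α α' β β' : ℝ} (ha : ∀ i, |a i - a' i| ≤ α) (hc : ∀ i, |c i| ≤ β)
    (ha' : ∀ i, |a' i| ≤ α') (hc' : ∀ i, |c i - c' i| ≤ β') :
    |∑ i, a i * c i - ∑ i, a' i * c' i| ≤ Fintype.card ι * (α * β + α' * β') := by
  have hterm : ∀ i, |a i * c i - a' i * c' i| ≤ α * β + α' * β' := fun i => by
    rw [show a i * c i - a' i * c' i = (a i - a' i) * c i + a' i * (c i - c' i) by ring]
    refine (abs_add_le _ _).trans ?_
    rw [abs_mul, abs_mul]
    gcongr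
    exacts [(abs_nonneg _).trans (ha i), ha i, hc i, (abs_nonneg _).trans (ha' i), ha' i, hc' i]
  rw [← Finset.sum_sub_distrib]
  refine (Finset.abs_sum_le_sum_abs _ _).trans ?_
  simpa [mul_add] using Finset.sum_le_card_nsmul Finset.univ _ _ fun i _ => hterm i

theorem abs_inner_sub_inner_le {V : Type*} [NormedAddCommGroup V] [InnerProductSpace ℝ V]
    (v v' w w' : V) : |⟪v, w⟫ - ⟪v', w'⟫| ≤ ‖v - v'‖ * ‖w‖ + ‖v'‖ * ‖w - w'‖ := by
  rw [show ⟪v, w⟫ - ⟪v', w'⟫ = ⟪v - v', w⟫ + ⟪v', w - w'⟫ by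
    rw [inner_sub_left, inner_sub_right]; ring]
  exact (abs_add_le _ _).trans
    (add_le_add (abs_real_inner_le_norm _ _) (abs_real_inner_le_norm _ _))

theorem sq_one_add_add_add_le (a b c : ℝ) :
    (1 + a + b + c) ^ 2 ≤ 4 * (1 + a ^ 2 + b ^ 2 + c ^ 2) := by
  nlinarith [sq_nonneg (a - 1), sq_nonneg (b - 1), sq_nonneg (c - 1), sq_nonneg (a - b),
    sq_nonneg (a - c), sq_nonneg (b - c)]

theorem add_mul_le_sq_mul_add_sq {P r : ℝ} (hP : 1 ≤ P) (hr : 0 ≤ r) :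
    (P + r) * r ≤ P ^ 2 * (r + r ^ 2) := by
  have hP₂ : P ≤ P ^ 2 := by nlinarith
  nlinarith [mul_le_mul_of_nonneg_right hP₂ hr,
    mul_le_mul_of_nonneg_right (hP.trans hP₂) (sq_nonneg r)]

theorem le_sq_mul_add_sq {P r : ℝ} (hP : 1 ≤ P) (hr : 0 ≤ r) : r ≤ P ^ 2 * (r + r ^ 2) := by
  nlinarith [add_mul_le_sq_mul_add_sq hP hr]

theorem abs_drift_sub_le {ι : Type*} [Fintype ι] {g g' β β' : ι → ℝ} {M K A P r : ℝ}
    (hM : 0 ≤ M) (hK : 0 ≤ K) (hA : 0 ≤ A) (hP : 1 ≤ P) (hr : 0 ≤ r)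
    (hg : ∀ i, |g i - g' i| ≤ M * r) (hβ : ∀ i, |β i| ≤ A * (P + r))
    (hg' : ∀ i, |g' i| ≤ M) (hβd : ∀ i, |β i - β' i| ≤ K * r) :
    |∑ i, g i * β i - ∑ i, g' i * β' i|
      ≤ Fintype.card ι * (M * (A + K)) * (P ^ 2 * (r + r ^ 2)) := by
  have hr' : r ≤ (P + r) * r := by nlinarith
  calc _ ≤ Fintype.card ι * (M * r * (A * (P + r)) + M * (K * r)) :=
        abs_sum_mul_sub_sum_mul_le hg hβ hg' hβd
    _ = Fintype.card ι * (M * (A * ((P + r) * r) + K * r)) := by ring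
    _ ≤ Fintype.card ι * (M * (A * ((P + r) * r) + K * ((P + r) * r))) := by gcongr
    _ = Fintype.card ι * (M * (A + K)) * ((P + r) * r) := by ring
    _ ≤ _ := mul_le_mul_of_nonneg_left (add_mul_le_sq_mul_add_sq hP hr) (by positivity)

theorem abs_diffusion_sub_le {ι V : Type*} [Fintype ι] [NormedAddCommGroup V]
    [InnerProductSpace ℝ V] {v v' : ι → V} {H H' : ι → ι → ℝ} {M K A P r : ℝ}
    (hM : 0 ≤ M) (hK : 0 ≤ K) (hA : 0 ≤ A) (hP : 1 ≤ P) (hr : 0 ≤ r)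
    (hv : ∀ i, ‖v i‖ ≤ A * (P + r)) (hv' : ∀ i, ‖v' i‖ ≤ A * P)
    (hvd : ∀ i, ‖v i - v' i‖ ≤ K * r)
    (hH : ∀ i j, |H i j| ≤ M) (hHd : ∀ i j, |H i j - H' i j| ≤ M * r) :
    |∑ i, ∑ j, ⟪v i, v j⟫ * H i j - ∑ i, ∑ j, ⟪v' i, v' j⟫ * H' i j|
      ≤ Fintype.card ι ^ 2 * (M * A * (2 * K + A)) * (P ^ 2 * (r + r ^ 2)) := by
  have hinner : ∀ p : ι × ι, |⟪v p.1, v p.2⟫ - ⟪v' p.1, v' p.2⟫|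
      ≤ K * r * (A * (P + r)) + A * P * (K * r) := fun p =>
    (abs_inner_sub_inner_le _ _ _ _).trans (add_le_add
      (mul_le_mul (hvd _) (hv _) (norm_nonneg _) (by positivity))
      (mul_le_mul (hv' _) (hvd _) (norm_nonneg _) (by positivity)))
  have hinner' : ∀ p : ι × ι, |⟪v' p.1, v' p.2⟫| ≤ A * P * (A * P) := fun p =>
    (abs_real_inner_le_norm _ _).trans (by gcongr; exacts [hv' _, hv' _])
  have h₁ := add_mul_le_sq_mul_add_sq hP hr
  have h₂ : P * r ≤ P ^ 2 * (r + r ^ 2) := by nlinarith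
  have h₃ : P ^ 2 * r ≤ P ^ 2 * (r + r ^ 2) := by nlinarith
  rw [← Fintype.sum_prod_type', ← Fintype.sum_prod_type']
  calc _ ≤ Fintype.card (ι × ι) * ((K * r * (A * (P + r)) + A * P * (K * r)) * M
          + A * P * (A * P) * (M * r)) :=
        abs_sum_mul_sub_sum_mul_le hinner (fun p => hH p.1 p.2) hinner' (fun p => hHd p.1 p.2)
    _ = Fintype.card ι ^ 2 * (M * A * (K * ((P + r) * r + P * r) + A * (P ^ 2 * r))) := by
        rw [Fintype.card_prod]; push_cast; ring
    _ ≤ Fintype.card ι ^ 2 * (M * A * (K * (P ^ 2 * (r + r ^ 2) + P ^ 2 * (r + r ^ 2))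
          + A * (P ^ 2 * (r + r ^ 2)))) := by gcongr
    _ = _ := by ring

section Shift

variable {E Z V : Type*} [SeminormedAddCommGroup E] [SeminormedAddCommGroup Z]
  [SeminormedAddCommGroup V] {g : E → ℝ → Z → V}

theorem norm_shift_sub_le {K M : ℝ} (hK : 0 ≤ K)
    (hg : ∀ x x' y y' z z', ‖g x y z - g x' y' z'‖ ≤ K * (‖x - x'‖ + |y - y'| + ‖z - z'‖))
    {ψ : E → ℝ} {x x' : E} (hψ : |ψ x - ψ x'| ≤ M * ‖x - x'‖) (y : ℝ) (z : Z) :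
    ‖g x (y + ψ x) z - g x' (y + ψ x') z‖ ≤ K * (1 + M) * ‖x - x'‖ :=
  calc _ ≤ K * (‖x - x'‖ + |(y + ψ x) - (y + ψ x')| + ‖z - z‖) := hg _ _ _ _ _ _
    _ ≤ K * (‖x - x'‖ + M * ‖x - x'‖ + 0) := by
        rw [add_sub_add_left_eq_sub, sub_self, norm_zero]
        gcongr
    _ = K * (1 + M) * ‖x - x'‖ := by ring

theorem norm_shift_le {L S M : ℝ} (hL : 0 ≤ L) (hS : 0 ≤ S) (hM : 0 ≤ M)
    (hg : ∀ x y z, ‖g x y z‖ ≤ L * (1 + ‖x‖ + |y| + ‖z‖))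
    {x : E} {v : ℝ} (hv : |v| ≤ S + M * ‖x‖) (y : ℝ) (z : Z) :
    ‖g x (y + v) z‖ ≤ L * (1 + S + M) * (1 + ‖x‖ + |y| + ‖z‖) := by
  have hy : |y + v| ≤ |y| + (S + M * ‖x‖) := (abs_add_le y v).trans (by gcongr)
  calc _ ≤ L * (1 + ‖x‖ + |y + v| + ‖z‖) := hg _ _ _
    _ ≤ L * ((1 + S + M) * (1 + ‖x‖ + |y| + ‖z‖)) := by
        gcongr
        nlinarith [norm_nonneg x, abs_nonneg y, norm_nonneg z]
    _ = _ := by ring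

end Shift

section Generator

variable {m k : ℕ} {U : Type*}
  {b : ℝ → EuclideanSpace ℝ (Fin m) → ℝ → EuclideanSpace ℝ (Fin k) → U →
    EuclideanSpace ℝ (Fin m)}
  {f : ℝ → EuclideanSpace ℝ (Fin m) → ℝ → EuclideanSpace ℝ (Fin k) → U → ℝ}
  {σ : ℝ → EuclideanSpace ℝ (Fin m) → ℝ → EuclideanSpace ℝ (Fin k) →
    Fin m → EuclideanSpace ℝ (Fin k)}
  {φ : ℝ → EuclideanSpace ℝ (Fin m) → ℝ} {K L M S s : ℝ} {u : U}

variable (b φ) in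
noncomputable def shiftedDrift (s : ℝ) (x : EuclideanSpace ℝ (Fin m)) (y : ℝ)
    (z : EuclideanSpace ℝ (Fin k)) (u : U) : ℝ :=
  ∑ i : Fin m, fderiv ℝ (φ s) x (EuclideanSpace.single i 1) * b s x (y + φ s x) z u i

variable (σ φ) in
/-- `tr(σσᵀ D²φ)`, written through the rows `σ i` of `σ` as `∑ i j, ⟪σ i, σ j⟫ ∂ᵢ∂ⱼφ`. -/
noncomputable def shiftedDiffusion (s : ℝ) (x : EuclideanSpace ℝ (Fin m)) (y : ℝ)
    (z : EuclideanSpace ℝ (Fin k)) : ℝ :=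
  ∑ i : Fin m, ∑ j : Fin m, ⟪σ s x (y + φ s x) z i, σ s x (y + φ s x) z j⟫ *
    fderiv ℝ (fun v => fderiv ℝ (φ s) v (EuclideanSpace.single j 1)) x (EuclideanSpace.single i 1)

variable (b f σ φ) in
/-- The function `L` of the paper. -/
noncomputable def shiftedGenerator (s : ℝ) (x : EuclideanSpace ℝ (Fin m)) (y : ℝ)
    (z : EuclideanSpace ℝ (Fin k)) (u : U) : ℝ :=
  deriv (fun t => φ t x) s + shiftedDrift b φ s x y z u + (1 / 2) * shiftedDiffusion σ φ s x y z
    + f s x (y + φ s x) z u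

theorem abs_shiftedDrift_sub_le (hK : 0 ≤ K) (hL : 0 ≤ L) (hM : 0 ≤ M) (hS : 0 ≤ S)
    (hb : ∀ x x' y y' z z', ‖b s x y z u - b s x' y' z' u‖ ≤ K * (‖x - x'‖ + |y - y'| + ‖z - z'‖))
    (hbG : ∀ x y z, ‖b s x y z u‖ ≤ L * (1 + ‖x‖ + |y| + ‖z‖))
    (hφ : ContDiff ℝ 2 (uncurry φ)) (h₁ : ∀ p, ‖iteratedFDeriv ℝ 1 (uncurry φ) p‖ ≤ M)
    (h₂ : ∀ p, ‖iteratedFDeriv ℝ 2 (uncurry φ) p‖ ≤ M) (hφ₀ : |φ s 0| ≤ S)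
    (x x' : EuclideanSpace ℝ (Fin m)) (y : ℝ) (z : EuclideanSpace ℝ (Fin k)) :
    |shiftedDrift b φ s x y z u - shiftedDrift b φ s x' y z u|
      ≤ m * (M * (L * (1 + S + M) + K * (1 + M)))
          * ((1 + ‖x'‖ + |y| + ‖z‖) ^ 2 * (‖x - x'‖ + ‖x - x'‖ ^ 2)) := by
  have hφ₁ : Differentiable ℝ (uncurry φ) := hφ.differentiable (by norm_num)
  have hP : 1 ≤ 1 + ‖x'‖ + |y| + ‖z‖ := by linarith [norm_nonneg x', abs_nonneg y, norm_nonneg z]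
  have hx : 1 + ‖x‖ + |y| + ‖z‖ ≤ 1 + ‖x'‖ + |y| + ‖z‖ + ‖x - x'‖ := by
    linarith [norm_le_norm_add_norm_sub' x x']
  have := abs_drift_sub_le hM (by positivity : 0 ≤ K * (1 + M))
    (by positivity : 0 ≤ L * (1 + S + M)) hP (norm_nonneg (x - x'))
    (fun i => by
      simpa using abs_fderiv_slice_apply_sub_le hφ h₂ s x x' (EuclideanSpace.single i 1))
    (fun i => (PiLp.norm_apply_le _ i).trans
      ((norm_shift_le (g := (b s · · · u)) hL hS hM hbG (abs_slice_le hφ₁ h₁ hφ₀ x) y z).trans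
        (by gcongr)))
    (fun i => by
      simpa using abs_fderiv_slice_apply_le hφ₁ h₁ s x' (EuclideanSpace.single i 1))
    (fun i => (PiLp.norm_apply_le (b s x (y + φ s x) z u - b s x' (y + φ s x') z u) i).trans
      (norm_shift_sub_le (g := (b s · · · u)) hK hb (abs_slice_sub_le hφ₁ h₁ s x x') y z))
  rwa [Fintype.card_fin] at this

theorem abs_shiftedDiffusion_sub_le (hK : 0 ≤ K) (hL : 0 ≤ L) (hM : 0 ≤ M) (hS : 0 ≤ S)
    (hσ : ∀ x x' y y' z z', ‖σ s x y z - σ s x' y' z'‖ ≤ K * (‖x - x'‖ + |y - y'| + ‖z - z'‖))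
    (hσG : ∀ x y z, ‖σ s x y z‖ ≤ L * (1 + ‖x‖ + |y| + ‖z‖))
    (hφ : ContDiff ℝ 3 (uncurry φ)) (h₁ : ∀ p, ‖iteratedFDeriv ℝ 1 (uncurry φ) p‖ ≤ M)
    (h₂ : ∀ p, ‖iteratedFDeriv ℝ 2 (uncurry φ) p‖ ≤ M)
    (h₃ : ∀ p, ‖iteratedFDeriv ℝ 3 (uncurry φ) p‖ ≤ M) (hφ₀ : |φ s 0| ≤ S)
    (x x' : EuclideanSpace ℝ (Fin m)) (y : ℝ) (z : EuclideanSpace ℝ (Fin k)) :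
    |shiftedDiffusion σ φ s x y z - shiftedDiffusion σ φ s x' y z|
      ≤ m ^ 2 * (M * (L * (1 + S + M)) * (2 * (K * (1 + M)) + L * (1 + S + M)))
          * ((1 + ‖x'‖ + |y| + ‖z‖) ^ 2 * (‖x - x'‖ + ‖x - x'‖ ^ 2)) := by
  have hφ₁ : Differentiable ℝ (uncurry φ) := hφ.differentiable (by norm_num)
  have hφ₂ : ContDiff ℝ 2 (uncurry φ) := hφ.of_le (by norm_num)
  have hP : 1 ≤ 1 + ‖x'‖ + |y| + ‖z‖ := by linarith [norm_nonneg x', abs_nonneg y, norm_nonneg z]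
  have hx : 1 + ‖x‖ + |y| + ‖z‖ ≤ 1 + ‖x'‖ + |y| + ‖z‖ + ‖x - x'‖ := by
    linarith [norm_le_norm_add_norm_sub' x x']
  have := abs_diffusion_sub_le hM (by positivity : 0 ≤ K * (1 + M))
    (by positivity : 0 ≤ L * (1 + S + M)) hP (norm_nonneg (x - x'))
    (fun i => (norm_le_pi_norm _ i).trans
      ((norm_shift_le hL hS hM hσG (abs_slice_le hφ₁ h₁ hφ₀ x) y z).trans (by gcongr)))
    (fun i => (norm_le_pi_norm _ i).trans
      (norm_shift_le hL hS hM hσG (abs_slice_le hφ₁ h₁ hφ₀ x') y z))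
    (fun i => (norm_le_pi_norm (σ s x (y + φ s x) z - σ s x' (y + φ s x') z) i).trans
      (norm_shift_sub_le hK hσ (abs_slice_sub_le hφ₁ h₁ s x x') y z))
    (fun i j => by
      simpa using abs_fderiv_fderiv_slice_apply_le hφ₂ h₂ s x
        (EuclideanSpace.single j 1) (EuclideanSpace.single i 1))
    (fun i j => by
      simpa using abs_fderiv_fderiv_slice_apply_sub_le hφ h₃ s x x'
        (EuclideanSpace.single j 1) (EuclideanSpace.single i 1))
  rwa [Fintype.card_fin] at this

noncomputable def shiftedGeneratorConst (m : ℕ) (K L M S : ℝ) : ℝ :=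
  M + m * (M * (L * (1 + S + M) + K * (1 + M)))
    + m ^ 2 * (M * (L * (1 + S + M)) * (2 * (K * (1 + M)) + L * (1 + S + M))) / 2
    + K * (1 + M)

theorem shiftedGeneratorConst_nonneg (m : ℕ) (hK : 0 ≤ K) (hL : 0 ≤ L) (hM : 0 ≤ M)
    (hS : 0 ≤ S) : 0 ≤ shiftedGeneratorConst m K L M S := by
  unfold shiftedGeneratorConst
  positivity

theorem abs_shiftedGenerator_sub_le (hK : 0 ≤ K) (hL : 0 ≤ L) (hM : 0 ≤ M) (hS : 0 ≤ S)
    (hb : ∀ x x' y y' z z', ‖b s x y z u - b s x' y' z' u‖ ≤ K * (‖x - x'‖ + |y - y'| + ‖z - z'‖))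
    (hbG : ∀ x y z, ‖b s x y z u‖ ≤ L * (1 + ‖x‖ + |y| + ‖z‖))
    (hf : ∀ x x' y y' z z', |f s x y z u - f s x' y' z' u| ≤ K * (‖x - x'‖ + |y - y'| + ‖z - z'‖))
    (hσ : ∀ x x' y y' z z', ‖σ s x y z - σ s x' y' z'‖ ≤ K * (‖x - x'‖ + |y - y'| + ‖z - z'‖))
    (hσG : ∀ x y z, ‖σ s x y z‖ ≤ L * (1 + ‖x‖ + |y| + ‖z‖))
    (hφ : ContDiff ℝ 3 (uncurry φ)) (h₁ : ∀ p, ‖iteratedFDeriv ℝ 1 (uncurry φ) p‖ ≤ M)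
    (h₂ : ∀ p, ‖iteratedFDeriv ℝ 2 (uncurry φ) p‖ ≤ M)
    (h₃ : ∀ p, ‖iteratedFDeriv ℝ 3 (uncurry φ) p‖ ≤ M) (hφ₀ : |φ s 0| ≤ S)
    (x x' : EuclideanSpace ℝ (Fin m)) (y : ℝ) (z : EuclideanSpace ℝ (Fin k)) :
    |shiftedGenerator b f σ φ s x y z u - shiftedGenerator b f σ φ s x' y z u|
      ≤ shiftedGeneratorConst m K L M S
          * ((1 + ‖x'‖ + |y| + ‖z‖) ^ 2 * (‖x - x'‖ + ‖x - x'‖ ^ 2)) := by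
  have hφ₁ : Differentiable ℝ (uncurry φ) := hφ.differentiable (by norm_num)
  have hτ := abs_deriv_slice_sub_le (hφ.of_le (by norm_num)) h₂ s x x'
  have hdrift := abs_shiftedDrift_sub_le hK hL hM hS hb hbG (hφ.of_le (by norm_num)) h₁ h₂ hφ₀
    x x' y z
  have hdiff := abs_shiftedDiffusion_sub_le hK hL hM hS hσ hσG hφ h₁ h₂ h₃ hφ₀ x x' y z
  have hF : |f s x (y + φ s x) z u - f s x' (y + φ s x') z u| ≤ K * (1 + M) * ‖x - x'‖ :=
    norm_shift_sub_le (g := (f s · · · u)) hK hf (abs_slice_sub_le hφ₁ h₁ s x x') y z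
  have hr := le_sq_mul_add_sq (P := 1 + ‖x'‖ + |y| + ‖z‖)
    (by linarith [norm_nonneg x', abs_nonneg y, norm_nonneg z]) (norm_nonneg (x - x'))
  have hMr := mul_le_mul_of_nonneg_left hr hM
  have hK'r := mul_le_mul_of_nonneg_left hr (by positivity : 0 ≤ K * (1 + M))
  unfold shiftedGenerator shiftedGeneratorConst
  rw [abs_le] at hτ hF hdrift hdiff ⊢
  constructor <;> linarith [hτ.1, hτ.2, hF.1, hF.2, hdrift.1, hdrift.2, hdiff.1, hdiff.2]

end Generator

theorem case2_L_spatial_increment_general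
    (n d : ℕ) (T K L M : ℝ)
    (hK : 0 ≤ K) (hL : 0 ≤ L) (hM : 0 ≤ M)
    (U : Type*)
    (b : ℝ → EuclideanSpace ℝ (Fin (n + 1)) → ℝ → EuclideanSpace ℝ (Fin (d + 1)) → U →
      EuclideanSpace ℝ (Fin (n + 1)))
    (f : ℝ → EuclideanSpace ℝ (Fin (n + 1)) → ℝ → EuclideanSpace ℝ (Fin (d + 1)) → U → ℝ)
    (σ : ℝ → EuclideanSpace ℝ (Fin (n + 1)) → ℝ → EuclideanSpace ℝ (Fin (d + 1)) →
      Fin (n + 1) → EuclideanSpace ℝ (Fin (d + 1)))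
    (φ : ℝ → EuclideanSpace ℝ (Fin (n + 1)) → ℝ)
    (𝓛 : ℝ → EuclideanSpace ℝ (Fin (n + 1)) → ℝ → EuclideanSpace ℝ (Fin (d + 1)) → U → ℝ)
    (hbLip : ∀ t ∈ Set.Icc (0 : ℝ) T, ∀ x x' y y' z z' u,
      ‖b t x y z u - b t x' y' z' u‖ ≤ K * (‖x - x'‖ + |y - y'| + ‖z - z'‖))
    (hbGrowth : ∀ t ∈ Set.Icc (0 : ℝ) T, ∀ x y z u,
      ‖b t x y z u‖ ≤ L * (1 + ‖x‖ + |y| + ‖z‖))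
    (hfLip : ∀ t ∈ Set.Icc (0 : ℝ) T, ∀ x x' y y' z z' u,
      |f t x y z u - f t x' y' z' u| ≤ K * (‖x - x'‖ + |y - y'| + ‖z - z'‖))
    (hσLip : ∀ t ∈ Set.Icc (0 : ℝ) T, ∀ x x' y y' z z',
      ‖σ t x y z - σ t x' y' z'‖ ≤ K * (‖x - x'‖ + |y - y'| + ‖z - z'‖))
    (hσGrowth : ∀ t ∈ Set.Icc (0 : ℝ) T, ∀ x y z,
      ‖σ t x y z‖ ≤ L * (1 + ‖x‖ + |y| + ‖z‖))
    (hφ : ContDiff ℝ 3 (fun p : ℝ × EuclideanSpace ℝ (Fin (n + 1)) => φ p.1 p.2))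
    (hφBound : ∀ i : ℕ, 1 ≤ i → i ≤ 3 →
      ∀ p : ℝ × EuclideanSpace ℝ (Fin (n + 1)),
        ‖iteratedFDeriv ℝ i (fun q : ℝ × EuclideanSpace ℝ (Fin (n + 1)) => φ q.1 q.2) p‖ ≤ M)
    (h𝓛 : ∀ s x y z u, 𝓛 s x y z u =
      deriv (fun t => φ t x) s
      + ∑ i : Fin (n + 1),
          fderiv ℝ (φ s) x (EuclideanSpace.single i 1) * b s x (y + φ s x) z u i
      + (1 / 2) * ∑ i : Fin (n + 1), ∑ j : Fin (n + 1),
          ⟪σ s x (y + φ s x) z i, σ s x (y + φ s x) z j⟫ *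
            fderiv ℝ (fun v => fderiv ℝ (φ s) v (EuclideanSpace.single j 1)) x
              (EuclideanSpace.single i 1)
      + f s x (y + φ s x) z u) :
    ∃ C : ℝ, 0 < C ∧ ∀ s ∈ Set.Icc (0 : ℝ) T,
      ∀ (u : U) (x x' : EuclideanSpace ℝ (Fin (n + 1))) (y : ℝ)
        (z : EuclideanSpace ℝ (Fin (d + 1))),
      |𝓛 s x y z u - 𝓛 s x' y z u| ≤
        C * (1 + ‖x'‖ ^ 2 + |y| ^ 2 + ‖z‖ ^ 2) * (‖x - x'‖ + ‖x - x'‖ ^ 2) := by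
  have hφ' : ContDiff ℝ 3 (uncurry φ) := hφ
  obtain ⟨S₀, hS₀⟩ := (isCompact_Icc (a := (0 : ℝ)) (b := T)).exists_bound_of_continuousOn
    (f := fun s => φ s 0)
    (hφ'.continuous.comp (continuous_id.prodMk continuous_const)).continuousOn
  have hC := shiftedGeneratorConst_nonneg (n + 1) hK hL hM (le_max_right S₀ 0)
  refine ⟨4 * shiftedGeneratorConst (n + 1) K L M (max S₀ 0) + 1, by positivity,
    fun s hs u x x' y z => ?_⟩
  have hgen := abs_shiftedGenerator_sub_le hK hL hM (le_max_right S₀ 0)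
    (hbLip s hs · · · · · · u) (hbGrowth s hs · · · u) (hfLip s hs · · · · · · u)
    (hσLip s hs) (hσGrowth s hs) hφ' (hφBound 1 le_rfl (by norm_num))
    (hφBound 2 (by norm_num) (by norm_num)) (hφBound 3 (by norm_num) le_rfl)
    ((hS₀ s hs).trans (le_max_left S₀ 0)) x x' y z
  have hP := sq_one_add_add_add_le ‖x'‖ |y| ‖z‖
  rw [show 𝓛 = shiftedGenerator b f σ φ by funext s x y z u; exact h𝓛 s x y z u]
  calc _ ≤ _ := hgen
    _ ≤ shiftedGeneratorConst (n + 1) K L M (max S₀ 0)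
          * (4 * (1 + ‖x'‖ ^ 2 + |y| ^ 2 + ‖z‖ ^ 2) * (‖x - x'‖ + ‖x - x'‖ ^ 2)) := by
        gcongr
    _ = 4 * shiftedGeneratorConst (n + 1) K L M (max S₀ 0)
          * (1 + ‖x'‖ ^ 2 + |y| ^ 2 + ‖z‖ ^ 2) * (‖x - x'‖ + ‖x - x'‖ ^ 2) := by ring
    _ ≤ _ := by gcongr; linarith

/-- **Spatial-increment bound for `L` in Case 2 (proof of Lemma 4.6).**
In the Case-2 setting (where `σ` depends on `z` but not on the control), the function
`L(s,x,y,z,u) = ∂φ/∂s + ⟨D_xφ, b⟩ + ½ tr(σσᵀ D²_xφ) + f` (with arguments shifted by `φ`)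
satisfies `|L(s,x,y,z,u) - L(s,x',y,z,u)| ≤ C (1 + ‖x'‖² + |y|² + ‖z‖²)(‖x - x'‖ + ‖x - x'‖²)`.
Dimensions `n ≥ 1` and `d ≥ 1` are encoded as `n + 1` and `d + 1`; the matrix `σ` is encoded
via its rows `σ s x y z i ∈ ℝ^d`. -/
theorem case2_L_spatial_increment
    (n d : ℕ) (T K L M : ℝ)
    (hT : 0 < T) (hK : 0 ≤ K) (hL : 0 ≤ L) (hM : 0 ≤ M)
    (U : Type*) [MetricSpace U] [CompactSpace U]
    (b : ℝ → EuclideanSpace ℝ (Fin (n + 1)) → ℝ → EuclideanSpace ℝ (Fin (d + 1)) → U →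
      EuclideanSpace ℝ (Fin (n + 1)))
    (f : ℝ → EuclideanSpace ℝ (Fin (n + 1)) → ℝ → EuclideanSpace ℝ (Fin (d + 1)) → U → ℝ)
    (σ : ℝ → EuclideanSpace ℝ (Fin (n + 1)) → ℝ → EuclideanSpace ℝ (Fin (d + 1)) →
      Fin (n + 1) → EuclideanSpace ℝ (Fin (d + 1)))
    (φ : ℝ → EuclideanSpace ℝ (Fin (n + 1)) → ℝ)
    (𝓛 : ℝ → EuclideanSpace ℝ (Fin (n + 1)) → ℝ → EuclideanSpace ℝ (Fin (d + 1)) → U → ℝ)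
    (hbLip : ∀ t ∈ Set.Icc (0 : ℝ) T, ∀ x x' y y' z z' u,
      ‖b t x y z u - b t x' y' z' u‖ ≤ K * (‖x - x'‖ + |y - y'| + ‖z - z'‖))
    (hbGrowth : ∀ t ∈ Set.Icc (0 : ℝ) T, ∀ x y z u,
      ‖b t x y z u‖ ≤ L * (1 + ‖x‖ + |y| + ‖z‖))
    (hfLip : ∀ t ∈ Set.Icc (0 : ℝ) T, ∀ x x' y y' z z' u,
      |f t x y z u - f t x' y' z' u| ≤ K * (‖x - x'‖ + |y - y'| + ‖z - z'‖))
    (hfGrowth : ∀ t ∈ Set.Icc (0 : ℝ) T, ∀ x y z u,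
      |f t x y z u| ≤ L * (1 + ‖x‖ + |y| + ‖z‖))
    (hσLip : ∀ t ∈ Set.Icc (0 : ℝ) T, ∀ x x' y y' z z',
      ‖σ t x y z - σ t x' y' z'‖ ≤ K * (‖x - x'‖ + |y - y'| + ‖z - z'‖))
    (hσGrowth : ∀ t ∈ Set.Icc (0 : ℝ) T, ∀ x y z,
      ‖σ t x y z‖ ≤ L * (1 + ‖x‖ + |y| + ‖z‖))
    (hφ : ContDiff ℝ 3 (fun p : ℝ × EuclideanSpace ℝ (Fin (n + 1)) => φ p.1 p.2))
    (hφBound : ∀ i : ℕ, 1 ≤ i → i ≤ 3 →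
      ∀ p : ℝ × EuclideanSpace ℝ (Fin (n + 1)),
        ‖iteratedFDeriv ℝ i (fun q : ℝ × EuclideanSpace ℝ (Fin (n + 1)) => φ q.1 q.2) p‖ ≤ M)
    (h𝓛 : ∀ s x y z u, 𝓛 s x y z u =
      deriv (fun t => φ t x) s
      + ∑ i : Fin (n + 1),
          fderiv ℝ (φ s) x (EuclideanSpace.single i 1) * b s x (y + φ s x) z u i
      + (1 / 2) * ∑ i : Fin (n + 1), ∑ j : Fin (n + 1),
          ⟪σ s x (y + φ s x) z i, σ s x (y + φ s x) z j⟫ *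
            fderiv ℝ (fun v => fderiv ℝ (φ s) v (EuclideanSpace.single j 1)) x
              (EuclideanSpace.single i 1)
      + f s x (y + φ s x) z u) :
    ∃ C : ℝ, 0 < C ∧ ∀ s ∈ Set.Icc (0 : ℝ) T,
      ∀ (u : U) (x x' : EuclideanSpace ℝ (Fin (n + 1))) (y : ℝ)
        (z : EuclideanSpace ℝ (Fin (d + 1))),
      |𝓛 s x y z u - 𝓛 s x' y z u| ≤
        C * (1 + ‖x'‖ ^ 2 + |y| ^ 2 + ‖z‖ ^ 2) * (‖x - x'‖ + ‖x - x'‖ ^ 2) :=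
  case2_L_spatial_increment_general n d T K L M hK hL hM U b f σ φ 𝓛 hbLip hbGrowth hfLip hσLip
    hσGrowth hφ hφBound h𝓛
end
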